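/- arXiv:2007.10976 — 2 statements merged into one kernel-verified Lean document; each statement's English description precedes it below -/
import Mathlib

section
/- There exist universal constants ε₀ ∈ (0,1] and c > 0 with the following property. For every k ≥ 1, every ε ∈ (0, ε₀], every ρ ∈ (0,1], and every (n, ε)-uniformity test using the family 𝒲_ρ of all ρ-locally differentially private channels from [2k], it holds that n ≥ c · k / (ε² · ρ²). -/
open Finset

namespace Paper

/-- A probability distribution on a finite type, given by its mass function. -/
def IsDist {α : Type*} [Fintype α] (p : α → ℝ) : Prop :=
  (∀ a, 0 ≤ p a) ∧ ∑ a, p a = 1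

/-- A channel (row-stochastic kernel) from `α` to the finite alphabet `𝒴`. -/
def IsChannel {α 𝒴 : Type*} [Fintype α] [Fintype 𝒴] (W : α → 𝒴 → ℝ) : Prop :=
  ∀ x, IsDist (W x)

/-- Total variation distance between mass functions on a finite type. -/
noncomputable def tvDist {α : Type*} [Fintype α] (p q : α → ℝ) : ℝ :=
  (∑ a, |p a - q a|) / 2

/-- The element `2i-1` (1-indexed) of `[2k]`, i.e. index `2i` in 0-indexed terms. -/
def lo {k : ℕ} (i : Fin k) : Fin (2 * k) := ⟨2 * i.val, by have := i.isLt; omega⟩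

/-- The element `2i` (1-indexed) of `[2k]`, i.e. index `2i+1` in 0-indexed terms. -/
def hi {k : ℕ} (i : Fin k) : Fin (2 * k) := ⟨2 * i.val + 1, by have := i.isLt; omega⟩

/-- The channel information matrix `H(W)`  (division by `0` yields `0` in Lean,
matching the convention that terms with zero denominator vanish). -/
noncomputable def HMat (k : ℕ) {𝒴 : Type*} [Fintype 𝒴] (W : Fin (2 * k) → 𝒴 → ℝ) :
    Matrix (Fin k) (Fin k) ℝ := fun i j =>
  ∑ y, (W (lo i) y - W (hi i) y) * (W (lo j) y - W (hi j) y) / (∑ x, W x y)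

/-- Nuclear norm of a real symmetric matrix (sum of absolute values of eigenvalues). -/
noncomputable def nucNorm {k : ℕ} (A : Matrix (Fin k) (Fin k) ℝ) : ℝ :=
  if h : A.IsHermitian then ∑ i, |h.eigenvalues i| else 0

/-- Operator (spectral) norm of a real symmetric matrix. -/
noncomputable def opNorm {k : ℕ} (A : Matrix (Fin k) (Fin k) ℝ) : ℝ :=
  if h : A.IsHermitian then ⨆ i, |h.eigenvalues i| else 0

/-- Frobenius norm of a matrix. -/
noncomputable def frobNorm {k : ℕ} (A : Matrix (Fin k) (Fin k) ℝ) : ℝ :=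
  Real.sqrt (∑ i, ∑ j, (A i j) ^ 2)

/-- `‖𝒲‖_*`, the maximal nuclear norm of `H(W)` over the family. -/
noncomputable def famNuc (k : ℕ) {𝒴 : Type*} [Fintype 𝒴]
    (𝒲 : Set (Fin (2 * k) → 𝒴 → ℝ)) : ℝ :=
  sSup ((fun W => nucNorm (HMat k W)) '' 𝒲)

/-- `‖𝒲‖_op`, the maximal operator norm of `H(W)` over the family. -/
noncomputable def famOp (k : ℕ) {𝒴 : Type*} [Fintype 𝒴]
    (𝒲 : Set (Fin (2 * k) → 𝒴 → ℝ)) : ℝ :=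
  sSup ((fun W => opNorm (HMat k W)) '' 𝒲)

/-- `‖𝒲‖_F`, the maximal Frobenius norm of `H(W)` over the family. -/
noncomputable def famFrob (k : ℕ) {𝒴 : Type*} [Fintype 𝒴]
    (𝒲 : Set (Fin (2 * k) → 𝒴 → ℝ)) : ℝ :=
  sSup ((fun W => frobNorm (HMat k W)) '' 𝒲)

/-- A deterministic sequentially interactive protocol over `n` users: to each user `t`
and each message prefix it assigns a channel. -/
def Protocol (k n : ℕ) (𝒴 : Type*) : Type _ :=
  (t : Fin n) → (Fin t.val → 𝒴) → Fin (2 * k) → 𝒴 → ℝ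

/-- All channels used by the protocol belong to the family `𝒲`. -/
def UsesFamily {k n : ℕ} {𝒴 : Type*} (π : Protocol k n 𝒴)
    (𝒲 : Set (Fin (2 * k) → 𝒴 → ℝ)) : Prop :=
  ∀ t pre, π t pre ∈ 𝒲

/-- All kernels used by the protocol are genuine channels. -/
def ChannelProtocol {k n : ℕ} {𝒴 : Type*} [Fintype 𝒴] (π : Protocol k n 𝒴) : Prop :=
  ∀ t pre, IsChannel (π t pre)

/-- Distribution of the first `t` messages of the transcript when the inputs are
i.i.d. with law `p`. -/
noncomputable def prefixDist {k n : ℕ} {𝒴 : Type*} [Fintype 𝒴] (π : Protocol k n 𝒴)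
    (p : Fin (2 * k) → ℝ) (t : ℕ) (ht : t ≤ n) (y : Fin t → 𝒴) : ℝ :=
  ∏ s : Fin t, ∑ x, p x *
    π ⟨s.val, lt_of_lt_of_le s.isLt ht⟩ (fun r => y ⟨r.val, lt_trans r.isLt s.isLt⟩) x (y s)

/-- Distribution of the full transcript `Y^n` when the inputs are i.i.d. with law `p`. -/
noncomputable def transDist {k n : ℕ} {𝒴 : Type*} [Fintype 𝒴] (π : Protocol k n 𝒴)
    (p : Fin (2 * k) → ℝ) (y : Fin n → 𝒴) : ℝ :=
  prefixDist π p n le_rfl y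

/-- The uniform distribution on `[2k]`. -/
noncomputable def uniform2k (k : ℕ) : Fin (2 * k) → ℝ := fun _ => (2 * (k : ℝ))⁻¹

/-- An `(n, ε)`-estimator using `𝒲`: a public-coin sequentially interactive protocol
(seed distribution `μ`, protocols `π u`, channels from `𝒲`) together with an estimator
`est` such that, for every input distribution `p`, the probability that the estimate is
more than `ε` away from `p` in total variation is at most `1/100`. -/
def IsEstimator {k n : ℕ} {𝒴 𝒰 : Type*} [Fintype 𝒴] [Fintype 𝒰]
    (𝒲 : Set (Fin (2 * k) → 𝒴 → ℝ)) (μ : 𝒰 → ℝ) (π : 𝒰 → Protocol k n 𝒴)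
    (est : (Fin n → 𝒴) → 𝒰 → Fin (2 * k) → ℝ) (ε : ℝ) : Prop :=
  IsDist μ ∧ (∀ u, UsesFamily (π u) 𝒲) ∧ (∀ u, ChannelProtocol (π u)) ∧
  (∀ y u, IsDist (est y u)) ∧
  ∀ p : Fin (2 * k) → ℝ, IsDist p →
    (∑ u, ∑ y : Fin n → 𝒴, μ u * (transDist (π u) p y *
      (if ε < tvDist (est y u) p then (1 : ℝ) else 0))) ≤ 1 / 100

/-- An `(n, ε)`-uniformity test using `𝒲`: a public-coin sequentially interactive
protocol together with a randomized decision rule `T` (probability of output `1`)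
accepting uniform and rejecting `ε`-far distributions with probability `99/100`. -/
def IsUnifTest {k n : ℕ} {𝒴 𝒰 : Type*} [Fintype 𝒴] [Fintype 𝒰]
    (𝒲 : Set (Fin (2 * k) → 𝒴 → ℝ)) (μ : 𝒰 → ℝ) (π : 𝒰 → Protocol k n 𝒴)
    (T : (Fin n → 𝒴) → 𝒰 → ℝ) (ε : ℝ) : Prop :=
  IsDist μ ∧ (∀ u, UsesFamily (π u) 𝒲) ∧ (∀ u, ChannelProtocol (π u)) ∧
  (∀ y u, T y u ∈ Set.Icc (0 : ℝ) 1) ∧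
  (99 / 100 ≤ ∑ u, ∑ y : Fin n → 𝒴, μ u * (transDist (π u) (uniform2k k) y * (1 - T y u))) ∧
  ∀ p : Fin (2 * k) → ℝ, IsDist p → ε ≤ tvDist p (uniform2k k) →
    99 / 100 ≤ ∑ u, ∑ y : Fin n → 𝒴, μ u * (transDist (π u) p y * T y u)

/-- Mutual information (in nats) of a joint mass function on `A × B`. -/
noncomputable def miNats {A B : Type*} [Fintype A] [Fintype B] (j : A → B → ℝ) : ℝ :=
  ∑ a, ∑ b, j a b * Real.log (j a b / ((∑ b', j a b') * (∑ a', j a' b)))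

/-- Mutual information (in bits) of a joint mass function on `A × B`. -/
noncomputable def miBits {A B : Type*} [Fintype A] [Fintype B] (j : A → B → ℝ) : ℝ :=
  ∑ a, ∑ b, j a b * Real.logb 2 (j a b / ((∑ b', j a b') * (∑ a', j a' b)))

/-- Binary entropy function (in bits). -/
noncomputable def binEnt (t : ℝ) : ℝ :=
  -(t * Real.logb 2 t) - (1 - t) * Real.logb 2 (1 - t)

/-- `±1` encoding of a Boolean. -/
def pm (b : Bool) : ℝ := if b then 1 else -1

/-- The joint mass function of `(Z_i, Y)` obtained from a joint mass function of `(Z, Y)`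
for `Z ∈ {−1,+1}^k` (encoded via Booleans). -/
noncomputable def coordJoint {k : ℕ} {𝒴 : Type*} [Fintype 𝒴]
    (j : (Fin k → Bool) → 𝒴 → ℝ) (i : Fin k) : Bool → 𝒴 → ℝ :=
  fun b y => ∑ z : Fin k → Bool, if z i = b then j z y else 0

/-- The Paninski perturbation `p_z` of the uniform distribution on `[2k]`:
`p_z(2i−1) = (1+2ε z_i)/(2k)` and `p_z(2i) = (1−2ε z_i)/(2k)` (1-indexed). -/
noncomputable def paninski (k : ℕ) (ε : ℝ) (z : Fin k → Bool) : Fin (2 * k) → ℝ :=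
  fun x => (1 + (if x.val % 2 = 0 then (1 : ℝ) else -1) * (2 * ε) *
    pm (z ⟨x.val / 2, by have := x.isLt; omega⟩)) / (2 * k)

/-- Chi-square divergence between mass functions on a finite type. -/
noncomputable def chiSq {α : Type*} [Fintype α] (P Q : α → ℝ) : ℝ :=
  ∑ y, (P y - Q y) ^ 2 / Q y

/-- Kullback–Leibler divergence (in nats) between mass functions on a finite type. -/
noncomputable def klDivNats {α : Type*} [Fintype α] (P Q : α → ℝ) : ℝ :=
  ∑ y, P y * Real.log (P y / Q y)

/-- The leaky-query channel `W_u^η` on output alphabet `[2k] ∪ {1*, 0*}`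
(`Sum.inr true = 1*`, `Sum.inr false = 0*`). -/
noncomputable def leaky (k : ℕ) (η : ℝ) (u : Fin (2 * k) → ℝ) :
    Fin (2 * k) → (Fin (2 * k) ⊕ Bool) → ℝ :=
  fun x y => Sum.elim (fun x' => if x' = x then η else 0)
    (fun b => if b then (1 - η) * u x else (1 - η) * (1 - u x)) y

/-- The vector `δ(u)` associated with a leaky-query channel. -/
noncomputable def leakyDelta (k : ℕ) (u : Fin (2 * k) → ℝ) : Fin k → ℝ :=
  fun i => (u (lo i) - u (hi i)) *
    Real.sqrt ((2 * (k : ℝ)) / ((∑ x, u x) * (2 * (k : ℝ) - ∑ x, u x)))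

/-- The partial-erasure channel `W_{x*}` on output alphabet `[2k] ∪ {⊥}`. -/
noncomputable def eraseCh (k : ℕ) (η : ℝ) (xs : Fin (2 * k)) :
    Fin (2 * k) → (Fin (2 * k) ⊕ Unit) → ℝ :=
  fun x y => Sum.elim (fun x' => if x' = x then (if x = xs then 1 else η) else 0)
    (fun _ => if x = xs then 0 else 1 - η) y

/-- The family of all `ρ`-locally differentially private channels from `[2k]` to `𝒴`. -/
def ldpFamily (k : ℕ) {𝒴 : Type*} [Fintype 𝒴] (ρ : ℝ) :
    Set (Fin (2 * k) → 𝒴 → ℝ) :=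
  { W | IsChannel W ∧ ∀ x x' y, W x y ≤ Real.exp ρ * W x' y }

lemma pm_mul_self (b : Bool) : pm b * pm b = 1 := by cases b <;> norm_num [pm]
lemma pm_not (b : Bool) : pm (!b) = - pm b := by cases b <;> norm_num [pm]
lemma abs_pm (b : Bool) : |pm b| = 1 := by cases b <;> norm_num [pm]

/-- pairing equiv -/
def pairEquiv (k : ℕ) : (Fin k × Bool) ≃ Fin (2 * k) where
  toFun := fun p => if p.2 then hi p.1 else lo p.1
  invFun := fun x => (⟨x.val / 2, by have := x.isLt; omega⟩, decide (x.val % 2 = 1))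
  left_inv := by
    rintro ⟨i, b⟩
    cases b
    · refine Prod.ext (Fin.ext ?_) ?_ <;> simp [lo, hi] <;> omega
    · refine Prod.ext (Fin.ext ?_) ?_ <;> simp [lo, hi] <;> omega
  right_inv := by
    intro x
    by_cases h : x.val % 2 = 1 <;> simp [h, lo, hi] <;> exact Fin.ext (by simp; omega)

lemma sum_pair {k : ℕ} (f : Fin (2 * k) → ℝ) :
    ∑ x, f x = ∑ i : Fin k, (f (lo i) + f (hi i)) := by
  rw [← Equiv.sum_comp (pairEquiv k) f, Fintype.sum_prod_type]
  refine Finset.sum_congr rfl (fun i _ => ?_)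
  simp [pairEquiv, add_comm]

lemma lo_val_mod {k : ℕ} (i : Fin k) : (lo i).val % 2 = 0 := by show 2 * i.val % 2 = 0; omega
lemma hi_val_mod {k : ℕ} (i : Fin k) : (hi i).val % 2 = 1 := by show (2 * i.val + 1) % 2 = 1; omega
lemma lo_val_div {k : ℕ} (i : Fin k) : (lo i).val / 2 = i.val := by show 2 * i.val / 2 = i.val; omega
lemma hi_val_div {k : ℕ} (i : Fin k) : (hi i).val / 2 = i.val := by show (2 * i.val + 1) / 2 = i.val; omega

/-- snoc equiv for sums -/
def snocEquiv (t : ℕ) (𝒴 : Type*) : ((Fin t → 𝒴) × 𝒴) ≃ (Fin (t+1) → 𝒴) where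
  toFun := fun pb => Fin.snoc pb.1 pb.2
  invFun := fun y => (Fin.init y, y (Fin.last t))
  left_inv := by rintro ⟨p, b⟩; simp [Fin.init_snoc, Fin.snoc_last]
  right_inv := by intro y; simp [Fin.snoc_init_self]

lemma sum_snoc {t : ℕ} {𝒴 : Type*} [Fintype 𝒴] (F : (Fin (t+1) → 𝒴) → ℝ) :
    ∑ y, F y = ∑ pre : Fin t → 𝒴, ∑ b : 𝒴, F (Fin.snoc pre b) := by
  rw [← Equiv.sum_comp (snocEquiv t 𝒴) F, Fintype.sum_prod_type]
  rfl

/-- character sums -/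
lemma char_sum {k : ℕ} (S : Finset (Fin k)) :
    ∑ z : Fin k → Bool, ∏ i ∈ S, pm (z i) = if S = ∅ then (2:ℝ)^k else 0 := by
  by_cases hS : S = ∅
  · rw [hS, if_pos rfl]
    simp only [Finset.prod_empty]
    rw [Finset.sum_const, Finset.card_univ, Fintype.card_fun]
    simp
  · simp only [hS, if_false]
    obtain ⟨j, hj⟩ := Finset.nonempty_iff_ne_empty.2 hS
    refine Finset.sum_involution (fun z _ => Function.update z j (!(z j)))
      (fun z _ => ?_) (fun z _ _ hcon => ?_) (fun z _ => Finset.mem_univ _) (fun z _ => ?_)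
    · have h1 : ∏ i ∈ S, pm (Function.update z j (!(z j)) i)
          = pm (!(z j)) * ∏ i ∈ S.erase j, pm (z i) := by
        rw [← Finset.mul_prod_erase S _ hj, Function.update_self]
        congr 1
        exact Finset.prod_congr rfl (fun i hi => by
          rw [Function.update_of_ne (Finset.ne_of_mem_erase hi)])
      rw [h1, ← Finset.mul_prod_erase S (fun i => pm (z i)) hj, pm_not]
      ring
    · have h2 := congrFun hcon j
      simp only [Function.update_self] at h2
      cases h : z j <;> rw [h] at h2 <;> simp at h2
    · funext i
      by_cases h : i = j
      · subst h; simp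
      · simp [Function.update_of_ne h]

/-- flip of a coordinate in a set -/
def flipS {k : ℕ} (i : Fin k) (S : Finset (Fin k)) : Finset (Fin k) :=
  if i ∈ S then S.erase i else insert i S

lemma pm_mul_char {k : ℕ} (z : Fin k → Bool) (i : Fin k) (S : Finset (Fin k)) :
    pm (z i) * ∏ j ∈ S, pm (z j) = ∏ j ∈ flipS i S, pm (z j) := by
  by_cases h : i ∈ S
  · rw [flipS, if_pos h, ← Finset.mul_prod_erase S (fun j => pm (z j)) h, ← mul_assoc,
      pm_mul_self, one_mul]
  · rw [flipS, if_neg h, Finset.prod_insert h]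

lemma div_le_div_nonneg_denom {a b c : ℝ} (h : a ≤ b) (hc : 0 ≤ c) : a / c ≤ b / c :=
  div_le_div_of_nonneg_right h hc

lemma sq_sum_le_card_mul_sum_sq {ι : Type*} (s : Finset ι) (f : ι → ℝ) :
    (∑ i ∈ s, f i)^2 ≤ (s.card : ℝ) * ∑ i ∈ s, (f i)^2 := by
  have h := Finset.sum_mul_sq_le_sq_mul_sq s (fun _ => (1:ℝ)) f
  simpa using h


section Machinery
variable {k n : ℕ} {𝒴 : Type*} [Fintype 𝒴]

noncomputable def stepW (π : Protocol k n 𝒴) (t : ℕ) (pre : Fin t → 𝒴) :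
    Fin (2 * k) → 𝒴 → ℝ :=
  if h : t < n then π ⟨t, h⟩ pre else fun _ _ => 0

noncomputable def Sb (π : Protocol k n 𝒴) (t : ℕ) (pre : Fin t → 𝒴) (b : 𝒴) : ℝ :=
  ∑ x, stepW π t pre x b

noncomputable def Dlt (π : Protocol k n 𝒴) (t : ℕ) (pre : Fin t → 𝒴) (b : 𝒴) (i : Fin k) : ℝ :=
  stepW π t pre (lo i) b - stepW π t pre (hi i) b

noncomputable def dlt (ε : ℝ) (π : Protocol k n 𝒴) (t : ℕ) (pre : Fin t → 𝒴) (b : 𝒴)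
    (i : Fin k) : ℝ :=
  2 * ε * Dlt π t pre b i / Sb π t pre b

variable {π : Protocol k n 𝒴} {ρ : ℝ}

-- hypotheses bundle
def GoodProt (π : Protocol k n 𝒴) (ρ : ℝ) : Prop :=
  (∀ (t : Fin n) pre, IsChannel (π t pre)) ∧
  (∀ (t : Fin n) pre x x' y, π t pre x y ≤ Real.exp ρ * π t pre x' y)

lemma stepW_nonneg (hg : GoodProt π ρ) (t : ℕ) (pre : Fin t → 𝒴) (x : Fin (2*k)) (b : 𝒴) :
    0 ≤ stepW π t pre x b := by
  by_cases h : t < n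
  · unfold stepW
    rw [dif_pos h]
    exact (hg.1 ⟨t, h⟩ pre x).1 b
  · unfold stepW
    rw [dif_neg h]

lemma stepW_rowsum (hg : GoodProt π ρ) {t : ℕ} (ht : t < n) (pre : Fin t → 𝒴) (x : Fin (2*k)) :
    ∑ b, stepW π t pre x b = 1 := by
  unfold stepW
  rw [dif_pos ht]
  exact (hg.1 ⟨t, ht⟩ pre x).2

lemma stepW_ldp (hg : GoodProt π ρ) {t : ℕ} (ht : t < n) (pre : Fin t → 𝒴)
    (x x' : Fin (2*k)) (b : 𝒴) :
    stepW π t pre x b ≤ Real.exp ρ * stepW π t pre x' b := by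
  unfold stepW
  rw [dif_pos ht]
  exact hg.2 ⟨t, ht⟩ pre x x' b

lemma Sb_nonneg (hg : GoodProt π ρ) (t : ℕ) (pre : Fin t → 𝒴) (b : 𝒴) :
    0 ≤ Sb π t pre b :=
  Finset.sum_nonneg (fun x _ => stepW_nonneg hg t pre x b)

lemma sum_Sb (hg : GoodProt π ρ) {t : ℕ} (ht : t < n) (pre : Fin t → 𝒴) :
    ∑ b, Sb π t pre b = 2 * (k : ℝ) := by
  unfold Sb
  rw [Finset.sum_comm]
  have h1 : ∀ x ∈ (univ : Finset (Fin (2*k))), ∑ b, stepW π t pre x b = 1 :=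
    fun x _ => stepW_rowsum hg ht pre x
  rw [Finset.sum_congr rfl h1, Finset.sum_const, Finset.card_univ, Fintype.card_fin,
    nsmul_eq_mul, mul_one]
  push_cast
  ring

lemma stepW_eq_zero (hg : GoodProt π ρ) {t : ℕ} {pre : Fin t → 𝒴} {b : 𝒴}
    (h : Sb π t pre b = 0) (x : Fin (2*k)) : stepW π t pre x b = 0 := by
  have := (Finset.sum_eq_zero_iff_of_nonneg
    (fun x _ => stepW_nonneg hg t pre x b)).1 h
  exact this x (Finset.mem_univ x)

lemma Dlt_eq_zero (hg : GoodProt π ρ) {t : ℕ} {pre : Fin t → 𝒴} {b : 𝒴}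
    (h : Sb π t pre b = 0) (i : Fin k) : Dlt π t pre b i = 0 := by
  unfold Dlt
  rw [stepW_eq_zero hg h, stepW_eq_zero hg h, sub_zero]

lemma cross_zero (hg : GoodProt π ρ) {ε : ℝ} {t : ℕ} (ht : t < n) (pre : Fin t → 𝒴)
    (i : Fin k) :
    ∑ b, Sb π t pre b / (2 * (k:ℝ)) * dlt ε π t pre b i = 0 := by
  have hpt : ∀ b, Sb π t pre b / (2 * (k:ℝ)) * dlt ε π t pre b i
      = 2 * ε / (2 * (k:ℝ)) * Dlt π t pre b i := by
    intro b
    unfold dlt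
    rcases eq_or_ne (Sb π t pre b) 0 with h | h
    · rw [h, Dlt_eq_zero hg h]
      simp
    · rw [div_mul_div_comm, mul_comm (Sb π t pre b) (2 * ε * Dlt π t pre b i),
        mul_div_mul_right _ _ h, mul_div_assoc, div_mul_eq_mul_div, mul_div_assoc]
  rw [Finset.sum_congr rfl (fun b _ => hpt b), ← Finset.mul_sum]
  have : ∑ b, Dlt π t pre b i = 0 := by
    unfold Dlt
    rw [Finset.sum_sub_distrib, stepW_rowsum hg ht, stepW_rowsum hg ht, sub_self]
  rw [this, mul_zero]

lemma diag_bound (hg : GoodProt π ρ) (hk : 0 < k) (hρ0 : 0 ≤ ρ) (hρ1 : ρ ≤ 1)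
    {t : ℕ} (ht : t < n) (pre : Fin t → 𝒴) (i : Fin k) :
    ∑ b, (Dlt π t pre b i)^2 / Sb π t pre b ≤ 4 * ρ^2 / k := by
  set c1 := 1 - Real.exp (-ρ) with hc1
  have hc1nn : 0 ≤ c1 := by
    have : Real.exp (-ρ) ≤ 1 := Real.exp_le_one_iff.2 (by linarith)
    linarith
  have hc1ρ : c1 ≤ ρ := by
    have := Real.add_one_le_exp (-ρ)
    linarith
  set x₀ : Fin (2*k) := lo ⟨0, hk⟩ with hx₀
  have key : ∀ b, (Dlt π t pre b i)^2 / Sb π t pre b ≤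
      c1^2 * Real.exp ρ * Real.exp ρ * stepW π t pre x₀ b / (2 * (k:ℝ)) := by
    intro b
    set a := stepW π t pre (lo i) b
    set d := stepW π t pre (hi i) b
    set S := Sb π t pre b
    set W0 := stepW π t pre x₀ b
    have ha : 0 ≤ a := stepW_nonneg hg _ _ _ _
    have hd : 0 ≤ d := stepW_nonneg hg _ _ _ _
    have hW0 : 0 ≤ W0 := stepW_nonneg hg _ _ _ _
    have hS : 0 ≤ S := Sb_nonneg hg _ _ _
    have hexp : (0:ℝ) < Real.exp ρ := Real.exp_pos ρ
    have had : a ≤ Real.exp ρ * d := stepW_ldp hg ht pre _ _ b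
    have hda : d ≤ Real.exp ρ * a := stepW_ldp hg ht pre _ _ b
    have hexpm : (0:ℝ) ≤ Real.exp (-ρ) := (Real.exp_pos _).le
    have hda' : Real.exp (-ρ) * a ≤ d := by
      have h := mul_le_mul_of_nonneg_left had hexpm
      rwa [← mul_assoc, ← Real.exp_add, neg_add_cancel, Real.exp_zero, one_mul] at h
    have had' : Real.exp (-ρ) * d ≤ a := by
      have h := mul_le_mul_of_nonneg_left hda hexpm
      rwa [← mul_assoc, ← Real.exp_add, neg_add_cancel, Real.exp_zero, one_mul] at h
    set M := max a d with hM
    have hMnn : 0 ≤ M := le_trans ha (le_max_left a d)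
    have hMW0 : M ≤ Real.exp ρ * W0 :=
      max_le (stepW_ldp hg ht pre _ _ b) (stepW_ldp hg ht pre _ _ b)
    have hMS : 2 * (k:ℝ) * M ≤ Real.exp ρ * S := by
      have hx : ∀ x : Fin (2*k), M ≤ Real.exp ρ * stepW π t pre x b :=
        fun x => max_le (stepW_ldp hg ht pre _ _ b) (stepW_ldp hg ht pre _ _ b)
      have hsum : ∑ _x : Fin (2*k), M ≤ ∑ x, Real.exp ρ * stepW π t pre x b :=
        Finset.sum_le_sum (fun x _ => hx x)
      rw [Finset.sum_const, Finset.card_univ, Fintype.card_fin, ← Finset.mul_sum,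
        nsmul_eq_mul] at hsum
      calc 2 * (k:ℝ) * M = ((2*k : ℕ) : ℝ) * M := by push_cast; ring
        _ ≤ Real.exp ρ * S := hsum
    have habs : (a - d)^2 ≤ c1^2 * M^2 := by
      have hca : c1 * a ≤ c1 * M := mul_le_mul_of_nonneg_left (le_max_left a d) hc1nn
      have hcd : c1 * d ≤ c1 * M := mul_le_mul_of_nonneg_left (le_max_right a d) hc1nn
      have h1 : a - d ≤ c1 * M := by
        have : a - d ≤ c1 * a := by rw [hc1]; nlinarith [hda']
        linarith
      have h2 : -(c1 * M) ≤ a - d := by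
        have : d - a ≤ c1 * d := by rw [hc1]; nlinarith [had']
        linarith
      calc (a-d)^2 ≤ (c1*M)^2 := sq_le_sq' h2 h1
        _ = c1^2 * M^2 := by ring
    rcases eq_or_lt_of_le hS with hS0 | hSpos
    · rw [← hS0]
      rw [div_zero]
      positivity
    · have hprod : M * (2*(k:ℝ)*M) ≤ (Real.exp ρ * W0) * (Real.exp ρ * S) :=
        mul_le_mul hMW0 hMS (by positivity) (by positivity)
      rw [div_le_div_iff₀ hSpos (by positivity : (0:ℝ) < 2 * (k:ℝ))]
      calc (a-d)^2 * (2 * (k:ℝ)) ≤ (c1^2 * M^2) * (2*(k:ℝ)) :=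
            mul_le_mul_of_nonneg_right habs (by positivity)
        _ = c1^2 * (M * (2*(k:ℝ) * M)) := by ring
        _ ≤ c1^2 * ((Real.exp ρ * W0) * (Real.exp ρ * S)) :=
            mul_le_mul_of_nonneg_left hprod (sq_nonneg c1)
        _ = c1^2 * Real.exp ρ * Real.exp ρ * W0 * S := by ring
  calc ∑ b, (Dlt π t pre b i)^2 / Sb π t pre b
      ≤ ∑ b, c1^2 * Real.exp ρ * Real.exp ρ * stepW π t pre x₀ b / (2 * (k:ℝ)) :=
        Finset.sum_le_sum (fun b _ => key b)
    _ = c1^2 * Real.exp ρ * Real.exp ρ / (2 * (k:ℝ)) := by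
        rw [← Finset.sum_div]
        rw [← Finset.mul_sum, stepW_rowsum hg ht pre x₀, mul_one]
    _ ≤ 4 * ρ^2 / k := by
        have he : Real.exp ρ ≤ Real.exp 1 := Real.exp_le_exp.2 hρ1
        have he1 : Real.exp 1 < 2.7182818286 := Real.exp_one_lt_d9
        have hc1sq : c1^2 ≤ ρ^2 := pow_le_pow_left₀ hc1nn hc1ρ 2
        have hkpos : (0:ℝ) < k := by exact_mod_cast hk
        have hee : Real.exp ρ * Real.exp ρ ≤ 8 := by
          nlinarith [Real.exp_pos ρ, Real.exp_pos 1]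
        have h8 : c1^2 * Real.exp ρ * Real.exp ρ ≤ 8 * ρ^2 := by
          calc c1^2 * Real.exp ρ * Real.exp ρ = c1^2 * (Real.exp ρ * Real.exp ρ) := by ring
            _ ≤ ρ^2 * 8 := mul_le_mul hc1sq hee (by positivity) (sq_nonneg ρ)
            _ = 8 * ρ^2 := by ring
        calc c1^2 * Real.exp ρ * Real.exp ρ / (2 * (k:ℝ)) ≤ 8 * ρ^2 / (2 * (k:ℝ)) :=
              div_le_div_nonneg_denom h8 (by positivity)
          _ = 4 * ρ^2 / k := by
              field_simp
              ring

lemma trace_bound (hg : GoodProt π ρ) (hk : 0 < k) (hρ0 : 0 ≤ ρ) (hρ1 : ρ ≤ 1)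
    {t : ℕ} (ht : t < n) (pre : Fin t → 𝒴) :
    ∑ b, (∑ i, (Dlt π t pre b i)^2) / Sb π t pre b ≤ 4 * ρ^2 := by
  have : ∀ b, (∑ i, (Dlt π t pre b i)^2) / Sb π t pre b
      = ∑ i, (Dlt π t pre b i)^2 / Sb π t pre b := fun b => Finset.sum_div _ _ _
  rw [Finset.sum_congr rfl (fun b _ => this b), Finset.sum_comm]
  have hkpos : (0:ℝ) < k := by exact_mod_cast hk
  calc ∑ i : Fin k, ∑ b, (Dlt π t pre b i)^2 / Sb π t pre b
      ≤ ∑ _i : Fin k, 4 * ρ^2 / k :=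
        Finset.sum_le_sum (fun i _ => diag_bound hg hk hρ0 hρ1 ht pre i)
    _ = 4 * ρ^2 := by
        rw [Finset.sum_const, Finset.card_univ, Fintype.card_fin, nsmul_eq_mul]
        field_simp

noncomputable def wfun (ε : ℝ) (π : Protocol k n 𝒴) :
    (t : ℕ) → (Fin t → 𝒴) → (Fin k → Bool) → ℝ
  | 0, _, _ => 1
  | (t+1), y, z => wfun ε π t (Fin.init y) z *
      (1 + ∑ i, pm (z i) * dlt ε π t (Fin.init y) (y (Fin.last t)) i)

noncomputable def what (ε : ℝ) (π : Protocol k n 𝒴) (t : ℕ) (y : Fin t → 𝒴)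
    (S : Finset (Fin k)) : ℝ :=
  (∑ z : Fin k → Bool, wfun ε π t y z * ∏ i ∈ S, pm (z i)) / 2^k

noncomputable def Pz (π : Protocol k n 𝒴) (p : Fin (2*k) → ℝ) :
    (t : ℕ) → (Fin t → 𝒴) → ℝ
  | 0, _ => 1
  | (t+1), y => Pz π p t (Fin.init y) *
      ∑ x, p x * stepW π t (Fin.init y) x (y (Fin.last t))

lemma Pz_snoc (π : Protocol k n 𝒴) (p : Fin (2*k) → ℝ) (t : ℕ) (pre : Fin t → 𝒴) (b : 𝒴) :
    Pz π p (t+1) (Fin.snoc pre b) = Pz π p t pre * ∑ x, p x * stepW π t pre x b := by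
  simp only [Pz, Fin.init_snoc, Fin.snoc_last]

lemma wfun_snoc (ε : ℝ) (π : Protocol k n 𝒴) (t : ℕ) (pre : Fin t → 𝒴) (b : 𝒴)
    (z : Fin k → Bool) :
    wfun ε π (t+1) (Fin.snoc pre b) z
      = wfun ε π t pre z * (1 + ∑ i, pm (z i) * dlt ε π t pre b i) := by
  simp only [wfun, Fin.init_snoc, Fin.snoc_last]

lemma prefix_eq_Pz (π : Protocol k n 𝒴) (p : Fin (2*k) → ℝ) :
    ∀ (t : ℕ) (ht : t ≤ n) (y : Fin t → 𝒴), prefixDist π p t ht y = Pz π p t y := by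
  intro t
  induction t with
  | zero => intro ht y; simp [prefixDist, Pz]
  | succ t ih =>
    intro ht y
    have htn : t < n := lt_of_lt_of_le (Nat.lt_succ_self t) ht
    have htle : t ≤ n := le_of_lt htn
    unfold prefixDist
    rw [Fin.prod_univ_castSucc]
    have h1 : (∏ s : Fin t, ∑ x, p x *
        π ⟨(Fin.castSucc s).val, lt_of_lt_of_le (Fin.castSucc s).isLt ht⟩
          (fun r => y ⟨r.val, lt_trans r.isLt (Fin.castSucc s).isLt⟩) x (y (Fin.castSucc s)))
        = Pz π p t (Fin.init y) := by
      rw [← ih htle (Fin.init y)]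
      unfold prefixDist
      rfl
    rw [h1]
    congr 1
    show (∑ x, p x * π ⟨t, htn⟩ (fun r => y ⟨r.val, lt_trans r.isLt (Fin.last t).isLt⟩) x
        (y (Fin.last t))) = _
    unfold stepW
    rw [dif_pos htn]
    rfl

lemma Pz_nonneg (hg : GoodProt π ρ) {p : Fin (2*k) → ℝ} (hp : ∀ x, 0 ≤ p x) :
    ∀ (t : ℕ) (y : Fin t → 𝒴), 0 ≤ Pz π p t y := by
  intro t
  induction t with
  | zero => intro y; rw [Pz]; norm_num
  | succ t ih =>
    intro y
    rw [Pz]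
    apply mul_nonneg (ih _)
    exact Finset.sum_nonneg (fun x _ => mul_nonneg (hp x) (stepW_nonneg hg _ _ _ _))

lemma Pz_mass (hg : GoodProt π ρ) {p : Fin (2*k) → ℝ} (hp : IsDist p) :
    ∀ (t : ℕ), t ≤ n → ∑ y : Fin t → 𝒴, Pz π p t y = 1 := by
  intro t
  induction t with
  | zero =>
    intro _
    have : ∀ y : Fin 0 → 𝒴, Pz π p 0 y = 1 := fun y => rfl
    rw [Finset.sum_congr rfl (fun y _ => this y), Finset.sum_const, Finset.card_univ,
      Fintype.card_fun]
    simp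
  | succ t ih =>
    intro ht
    have htn : t < n := lt_of_lt_of_le (Nat.lt_succ_self t) ht
    rw [sum_snoc (fun y => Pz π p (t+1) y)]
    have h1 : ∀ pre : Fin t → 𝒴, ∑ b, Pz π p (t+1) (Fin.snoc pre b)
        = Pz π p t pre := by
      intro pre
      have h2 : ∀ b, Pz π p (t+1) (Fin.snoc pre b)
          = Pz π p t pre * ∑ x, p x * stepW π t pre x b := fun b => Pz_snoc π p t pre b
      rw [Finset.sum_congr rfl (fun b _ => h2 b), ← Finset.mul_sum]
      have h3 : ∑ b, ∑ x, p x * stepW π t pre x b = 1 := by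
        rw [Finset.sum_comm]
        have h4 : ∀ x ∈ (univ : Finset (Fin (2*k))), ∑ b, p x * stepW π t pre x b = p x := by
          intro x _
          rw [← Finset.mul_sum, stepW_rowsum hg htn pre x, mul_one]
        rw [Finset.sum_congr rfl h4]
        exact hp.2
      rw [h3, mul_one]
    rw [Finset.sum_congr rfl (fun pre _ => h1 pre)]
    exact ih (le_of_lt htn)

lemma paninski_lo {ε : ℝ} (z : Fin k → Bool) (i : Fin k) :
    paninski k ε z (lo i) = (1 + 2 * ε * pm (z i)) / (2 * (k:ℝ)) := by
  unfold paninski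
  rw [if_pos (lo_val_mod i)]
  have h : (⟨(lo i).val / 2, by have := (lo i).isLt; omega⟩ : Fin k) = i :=
    Fin.ext (lo_val_div i)
  rw [h]
  ring_nf

lemma paninski_hi {ε : ℝ} (z : Fin k → Bool) (i : Fin k) :
    paninski k ε z (hi i) = (1 - 2 * ε * pm (z i)) / (2 * (k:ℝ)) := by
  unfold paninski
  rw [if_neg (by rw [hi_val_mod i]; norm_num)]
  have h : (⟨(hi i).val / 2, by have := (hi i).isLt; omega⟩ : Fin k) = i :=
    Fin.ext (hi_val_div i)
  rw [h]
  ring_nf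

lemma unif_step {t : ℕ} (pre : Fin t → 𝒴) (b : 𝒴) :
    ∑ x, uniform2k k x * stepW π t pre x b = Sb π t pre b / (2 * (k:ℝ)) := by
  unfold uniform2k Sb
  rw [← Finset.mul_sum, div_eq_mul_inv, mul_comm]

lemma paninski_step (hg : GoodProt π ρ) {ε : ℝ} {t : ℕ} (pre : Fin t → 𝒴) (b : 𝒴)
    (z : Fin k → Bool) :
    ∑ x, paninski k ε z x * stepW π t pre x b
      = Sb π t pre b / (2*(k:ℝ)) * (1 + ∑ i, pm (z i) * dlt ε π t pre b i) := by
  have hL : ∑ x, paninski k ε z x * stepW π t pre x b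
      = Sb π t pre b / (2*(k:ℝ)) + ∑ i, pm (z i) * (2 * ε * Dlt π t pre b i) / (2*(k:ℝ)) := by
    rw [sum_pair (fun x => paninski k ε z x * stepW π t pre x b)]
    have h1 : ∀ i : Fin k, paninski k ε z (lo i) * stepW π t pre (lo i) b
        + paninski k ε z (hi i) * stepW π t pre (hi i) b
        = (stepW π t pre (lo i) b + stepW π t pre (hi i) b) / (2*(k:ℝ))
          + pm (z i) * (2 * ε * Dlt π t pre b i) / (2*(k:ℝ)) := by
      intro i
      rw [paninski_lo, paninski_hi]
      unfold Dlt
      ring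
    rw [Finset.sum_congr rfl (fun i _ => h1 i), Finset.sum_add_distrib]
    congr 1
    rw [← Finset.sum_div]
    congr 1
    show _ = ∑ x, stepW π t pre x b
    exact (sum_pair (fun x => stepW π t pre x b)).symm
  rw [hL]
  rcases eq_or_ne (Sb π t pre b) 0 with h0 | h0
  · rw [h0]
    have hd : ∀ i : Fin k, Dlt π t pre b i = 0 := Dlt_eq_zero hg h0
    have : ∀ i ∈ (univ : Finset (Fin k)),
        pm (z i) * (2 * ε * Dlt π t pre b i) / (2*(k:ℝ)) = 0 := by
      intro i _
      rw [hd i]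
      ring
    rw [Finset.sum_congr rfl this]
    simp
  · rw [mul_add, mul_one]
    congr 1
    rw [Finset.mul_sum]
    refine Finset.sum_congr rfl (fun i _ => ?_)
    unfold dlt
    field_simp

lemma Pz_link (hg : GoodProt π ρ) {ε : ℝ} :
    ∀ (t : ℕ) (y : Fin t → 𝒴) (z : Fin k → Bool),
      Pz π (paninski k ε z) t y = Pz π (uniform2k k) t y * wfun ε π t y z := by
  intro t
  induction t with
  | zero => intro y z; simp [Pz, wfun]
  | succ t ih =>
    intro y z
    rw [← Fin.snoc_init_self y, Pz_snoc, Pz_snoc, wfun_snoc,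
      paninski_step hg _ _ z, unif_step, ih]
    ring

noncomputable def SSets (k ℓ : ℕ) : Finset (Finset (Fin k)) :=
  univ.filter (fun S => S.card = ℓ)

noncomputable def phi (ε : ℝ) (π : Protocol k n 𝒴) (ℓ t : ℕ) : ℝ :=
  ∑ y : Fin t → 𝒴, Pz π (uniform2k k) t y * ∑ S ∈ SSets k ℓ, (what ε π t y S)^2

lemma what_zero (ε : ℝ) (y : Fin 0 → 𝒴) (S : Finset (Fin k)) :
    what ε π 0 y S = if S = ∅ then 1 else 0 := by
  unfold what
  have h1 : ∀ z : Fin k → Bool, wfun ε π 0 y z * ∏ i ∈ S, pm (z i) = ∏ i ∈ S, pm (z i) := by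
    intro z; rw [wfun]; ring
  rw [Finset.sum_congr rfl (fun z _ => h1 z), char_sum]
  split
  · rw [div_self (by positivity)]
  · rw [zero_div]

lemma phi_zero (ε : ℝ) (ℓ : ℕ) : phi (𝒴 := 𝒴) ε π ℓ 0 = if ℓ = 0 then 1 else 0 := by
  unfold phi
  have h1 : ∀ y : Fin 0 → 𝒴, Pz π (uniform2k k) 0 y * ∑ S ∈ SSets k ℓ, (what ε π 0 y S)^2
      = if ℓ = 0 then 1 else 0 := by
    intro y
    rw [show Pz π (uniform2k k) 0 y = 1 from rfl, one_mul]
    have h2 : ∀ S ∈ SSets k ℓ, (what ε π 0 y S)^2 = if S = ∅ then 1 else 0 := by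
      intro S _
      rw [what_zero]
      split <;> norm_num
    rw [Finset.sum_congr rfl h2, Finset.sum_ite_eq' (SSets k ℓ) ∅ (fun _ => (1:ℝ))]
    by_cases hℓ : ℓ = 0 <;> simp [SSets, hℓ]
    · intro h; exact hℓ h.symm
  rw [Finset.sum_congr rfl (fun y _ => h1 y), Finset.sum_const, Finset.card_univ,
    Fintype.card_fun]
  simp

lemma what_snoc (ε : ℝ) (t : ℕ) (pre : Fin t → 𝒴) (b : 𝒴) (S : Finset (Fin k)) :
    what ε π (t+1) (Fin.snoc pre b) S
      = what ε π t pre S + ∑ i, dlt ε π t pre b i * what ε π t pre (flipS i S) := by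
  unfold what
  have h1 : ∀ z : Fin k → Bool,
      wfun ε π (t+1) (Fin.snoc pre b) z * ∏ i ∈ S, pm (z i)
      = wfun ε π t pre z * ∏ i ∈ S, pm (z i)
        + ∑ i, dlt ε π t pre b i * (wfun ε π t pre z * ∏ j ∈ flipS i S, pm (z j)) := by
    intro z
    rw [wfun_snoc]
    have h3 : ∀ i ∈ (univ : Finset (Fin k)),
        dlt ε π t pre b i * (wfun ε π t pre z * ∏ j ∈ flipS i S, pm (z j))
        = wfun ε π t pre z * (pm (z i) * dlt ε π t pre b i) * ∏ j ∈ S, pm (z j) := by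
      intro i _
      rw [← pm_mul_char z i S]
      ring
    rw [Finset.sum_congr rfl h3, ← Finset.sum_mul, ← Finset.mul_sum]
    ring
  rw [Finset.sum_congr rfl (fun z _ => h1 z), Finset.sum_add_distrib, add_div]
  congr 1
  rw [Finset.sum_comm, Finset.sum_div]
  refine Finset.sum_congr rfl (fun i _ => ?_)
  rw [← Finset.mul_sum, mul_div_assoc]

lemma mem_SSets {ℓ : ℕ} {S : Finset (Fin k)} : S ∈ SSets k ℓ ↔ S.card = ℓ := by
  unfold SSets
  simp

lemma up_eq (ℓ : ℕ) (f : Finset (Fin k) → ℝ) :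
    ∑ S ∈ SSets k ℓ, ∑ i ∈ Sᶜ, f (insert i S)
      = ((ℓ:ℝ)+1) * ∑ T ∈ SSets k (ℓ+1), f T := by
  have raw : ∑ S ∈ SSets k ℓ, ∑ i ∈ Sᶜ, f (insert i S)
      = ∑ T ∈ SSets k (ℓ+1), ∑ _i ∈ T, f T := by
    rw [Finset.sum_sigma' (SSets k ℓ) (fun S => Sᶜ) (fun S i => f (insert i S)),
      Finset.sum_sigma' (SSets k (ℓ+1)) (fun T => T) (fun T _ => f T)]
    refine Finset.sum_nbij' (fun p => ⟨insert p.2 p.1, p.2⟩) (fun q => ⟨q.1.erase q.2, q.2⟩)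
      ?_ ?_ ?_ ?_ ?_
    · rintro ⟨S, i⟩ hp
      rw [Finset.mem_sigma] at hp
      obtain ⟨hS, hiS⟩ := hp
      rw [Finset.mem_compl] at hiS
      rw [Finset.mem_sigma]
      exact ⟨mem_SSets.2 (by rw [Finset.card_insert_of_notMem hiS, mem_SSets.1 hS]),
        Finset.mem_insert_self _ _⟩
    · rintro ⟨T, i⟩ hq
      rw [Finset.mem_sigma] at hq
      obtain ⟨hT, hiT⟩ := hq
      rw [Finset.mem_sigma]
      exact ⟨mem_SSets.2 (by rw [Finset.card_erase_of_mem hiT, mem_SSets.1 hT]; omega),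
        Finset.mem_compl.2 (Finset.notMem_erase _ _)⟩
    · rintro ⟨S, i⟩ hp
      rw [Finset.mem_sigma] at hp
      have hiS := Finset.mem_compl.1 hp.2
      simp only [Finset.erase_insert hiS]
    · rintro ⟨T, i⟩ hq
      rw [Finset.mem_sigma] at hq
      simp only [Finset.insert_erase hq.2]
    · rintro ⟨S, i⟩ _
      rfl
  rw [raw]
  have h2 : ∀ T ∈ SSets k (ℓ+1), (∑ _i ∈ T, f T) = ((ℓ:ℝ)+1) * f T := by
    intro T hT
    rw [Finset.sum_const, mem_SSets.1 hT, nsmul_eq_mul]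
    push_cast
    ring
  rw [Finset.sum_congr rfl h2, ← Finset.mul_sum]

lemma down_le (ℓ : ℕ) (f : Finset (Fin k) → ℝ) (hf : ∀ T, 0 ≤ f T) :
    ∑ S ∈ SSets k ℓ, ∑ i ∈ S, f (S.erase i)
      ≤ (k:ℝ) * ∑ T ∈ SSets k (ℓ-1), f T := by
  cases ℓ with
  | zero =>
    have h1 : ∀ S ∈ SSets k 0, ∑ i ∈ S, f (S.erase i) = 0 := by
      intro S hS
      have hS0 : S = ∅ := Finset.card_eq_zero.1 (mem_SSets.1 hS)
      rw [hS0]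
      simp
    rw [Finset.sum_congr rfl h1]
    simp only [Finset.sum_const_zero]
    have : (0:ℝ) ≤ ∑ T ∈ SSets k 0, f T := Finset.sum_nonneg (fun T _ => hf T)
    positivity
  | succ m =>
    have raw : ∑ S ∈ SSets k (m+1), ∑ i ∈ S, f (S.erase i)
        = ∑ T ∈ SSets k m, ∑ _i ∈ Tᶜ, f T := by
      rw [Finset.sum_sigma' (SSets k (m+1)) (fun S => S) (fun S i => f (S.erase i)),
        Finset.sum_sigma' (SSets k m) (fun T => Tᶜ) (fun T _ => f T)]
      refine Finset.sum_nbij' (fun p => ⟨p.1.erase p.2, p.2⟩) (fun q => ⟨insert q.2 q.1, q.2⟩)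
        ?_ ?_ ?_ ?_ ?_
      · rintro ⟨S, i⟩ hp
        rw [Finset.mem_sigma] at hp
        obtain ⟨hS, hiS⟩ := hp
        rw [Finset.mem_sigma]
        exact ⟨mem_SSets.2 (by rw [Finset.card_erase_of_mem hiS, mem_SSets.1 hS]; omega),
          Finset.mem_compl.2 (Finset.notMem_erase _ _)⟩
      · rintro ⟨T, i⟩ hq
        rw [Finset.mem_sigma] at hq
        obtain ⟨hT, hiT⟩ := hq
        rw [Finset.mem_compl] at hiT
        rw [Finset.mem_sigma]
        exact ⟨mem_SSets.2 (by rw [Finset.card_insert_of_notMem hiT, mem_SSets.1 hT]),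
          Finset.mem_insert_self _ _⟩
      · rintro ⟨S, i⟩ hp
        rw [Finset.mem_sigma] at hp
        simp only [Finset.insert_erase hp.2]
      · rintro ⟨T, i⟩ hq
        rw [Finset.mem_sigma] at hq
        have hiT := Finset.mem_compl.1 hq.2
        simp only [Finset.erase_insert hiT]
      · rintro ⟨S, i⟩ _
        rfl
    rw [raw]
    have h2 : ∀ T ∈ SSets k m, (∑ _i ∈ Tᶜ, f T) ≤ (k:ℝ) * f T := by
      intro T hT
      rw [Finset.sum_const, nsmul_eq_mul]
      apply mul_le_mul_of_nonneg_right _ (hf T)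
      have : (Tᶜ.card : ℕ) ≤ k := by
        calc Tᶜ.card ≤ (univ : Finset (Fin k)).card := Finset.card_le_card (Finset.subset_univ _)
          _ = k := by rw [Finset.card_univ, Fintype.card_fin]
      exact_mod_cast this
    calc ∑ T ∈ SSets k m, ∑ _i ∈ Tᶜ, f T ≤ ∑ T ∈ SSets k m, (k:ℝ) * f T :=
          Finset.sum_le_sum h2
      _ = (k:ℝ) * ∑ T ∈ SSets k m, f T := by rw [← Finset.mul_sum]

lemma core_step (hg : GoodProt π ρ) (hk : 0 < k) (hρ0 : 0 ≤ ρ) (hρ1 : ρ ≤ 1)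
    (ε : ℝ) {t : ℕ} (ht : t < n) (pre : Fin t → 𝒴) (ℓ : ℕ) :
    ∑ b, Sb π t pre b / (2*(k:ℝ)) *
        ∑ S ∈ SSets k ℓ, (what ε π t pre S
          + ∑ i, dlt ε π t pre b i * what ε π t pre (flipS i S))^2
      ≤ (∑ S ∈ SSets k ℓ, (what ε π t pre S)^2)
        + 16*ε^2*ρ^2/(k:ℝ) * ((ℓ:ℝ) * ∑ T ∈ SSets k (ℓ-1), (what ε π t pre T)^2
            + ((ℓ:ℝ)+1) * ∑ T ∈ SSets k (ℓ+1), (what ε π t pre T)^2) := by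
  have hkR : (0:ℝ) < (k:ℝ) := by exact_mod_cast hk
  have h2k : (0:ℝ) < 2*(k:ℝ) := by linarith
  set A : Finset (Fin k) → ℝ := fun S => what ε π t pre S with hA
  set w : 𝒴 → ℝ := fun b => Sb π t pre b / (2*(k:ℝ)) with hw
  set D : Finset (Fin k) → 𝒴 → ℝ :=
    fun S b => ∑ i, dlt ε π t pre b i * A (flipS i S) with hD
  have hwnn : ∀ b, 0 ≤ w b := fun b => div_nonneg (Sb_nonneg hg _ _ _) (le_of_lt h2k)
  have hw1 : ∑ b, w b = 1 := by
    rw [hw]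
    simp only
    rw [← Finset.sum_div, sum_Sb hg ht pre, div_self (ne_of_gt h2k)]
  -- expand the square
  have expand : ∑ b, w b * ∑ S ∈ SSets k ℓ, (A S + D S b)^2
      = (∑ b, ∑ S ∈ SSets k ℓ, w b * (A S)^2)
        + ((∑ b, ∑ S ∈ SSets k ℓ, w b * (2 * A S * D S b))
          + (∑ b, ∑ S ∈ SSets k ℓ, w b * (D S b)^2)) := by
    rw [← Finset.sum_add_distrib, ← Finset.sum_add_distrib]
    refine Finset.sum_congr rfl (fun b _ => ?_)
    rw [Finset.mul_sum, ← Finset.sum_add_distrib, ← Finset.sum_add_distrib]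
    refine Finset.sum_congr rfl (fun S _ => ?_)
    ring
  -- first term
  have hE1 : ∑ b, ∑ S ∈ SSets k ℓ, w b * (A S)^2 = ∑ S ∈ SSets k ℓ, (A S)^2 := by
    rw [Finset.sum_comm]
    refine Finset.sum_congr rfl (fun S _ => ?_)
    rw [← Finset.sum_mul, hw1, one_mul]
  -- cross term vanishes
  have hE2 : ∑ b, ∑ S ∈ SSets k ℓ, w b * (2 * A S * D S b) = 0 := by
    rw [Finset.sum_comm]
    refine Finset.sum_eq_zero (fun S _ => ?_)
    have h1 : ∀ b, w b * (2 * A S * D S b) = 2 * A S * (w b * D S b) := fun b => by ring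
    rw [Finset.sum_congr rfl (fun b _ => h1 b), ← Finset.mul_sum]
    have h2 : ∑ b, w b * D S b = 0 := by
      have h3 : ∀ b, w b * D S b = ∑ i, (w b * dlt ε π t pre b i) * A (flipS i S) := by
        intro b
        rw [hD]
        simp only
        rw [Finset.mul_sum]
        exact Finset.sum_congr rfl (fun i _ => by ring)
      rw [Finset.sum_congr rfl (fun b _ => h3 b), Finset.sum_comm]
      refine Finset.sum_eq_zero (fun i _ => ?_)
      rw [← Finset.sum_mul]
      rw [show ∑ b, w b * dlt ε π t pre b i = 0 from cross_zero hg ht pre i, zero_mul]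
    rw [h2, mul_zero]
  -- third term
  set Q : Finset (Fin k) → 𝒴 → ℝ :=
    fun S b => ∑ i, Dlt π t pre b i * A (flipS i S) with hQdef
  have hE3pt : ∀ b S, w b * (D S b)^2 = 2*ε^2/(k:ℝ) * ((Q S b)^2 / Sb π t pre b) := by
    intro b S
    have hDQ : D S b = 2*ε*(Q S b)/(Sb π t pre b) := by
      rw [hD, hQdef]
      simp only
      rw [Finset.mul_sum, Finset.sum_div]
      refine Finset.sum_congr rfl (fun i _ => ?_)
      unfold dlt
      rw [div_mul_eq_mul_div]
      ring_nf
    rw [hDQ, hw]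
    simp only
    rcases eq_or_ne (Sb π t pre b) 0 with h0 | h0
    · rw [h0]
      simp
    · field_simp
  have hE3 : ∑ b, ∑ S ∈ SSets k ℓ, w b * (D S b)^2
      = 2*ε^2/(k:ℝ) * ∑ S ∈ SSets k ℓ, ∑ b, (Q S b)^2 / Sb π t pre b := by
    rw [Finset.sum_comm, Finset.mul_sum]
    refine Finset.sum_congr rfl (fun S _ => ?_)
    rw [Finset.mul_sum]
    exact Finset.sum_congr rfl (fun b _ => hE3pt b S)
  -- per-S bound on the quadratic term
  have hQS : ∀ S ∈ SSets k ℓ, ∑ b, (Q S b)^2 / Sb π t pre b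
      ≤ (8*ρ^2/(k:ℝ))*(ℓ:ℝ)*(∑ i ∈ S, (A (S.erase i))^2)
        + 8*ρ^2*(∑ i ∈ Sᶜ, (A (insert i S))^2) := by
    intro S hS
    have hcard : S.card = ℓ := mem_SSets.1 hS
    set X : 𝒴 → ℝ := fun b => ∑ i ∈ S, Dlt π t pre b i * A (S.erase i) with hX
    set Y : 𝒴 → ℝ := fun b => ∑ i ∈ Sᶜ, Dlt π t pre b i * A (insert i S) with hY
    have hsplit : ∀ b, Q S b = X b + Y b := by
      intro b
      rw [hQdef, hX, hY]
      simp only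
      rw [← Finset.sum_add_sum_compl S (fun i => Dlt π t pre b i * A (flipS i S))]
      congr 1
      · exact Finset.sum_congr rfl (fun i hi => by rw [flipS, if_pos hi])
      · exact Finset.sum_congr rfl (fun i hi => by
          rw [flipS, if_neg (Finset.mem_compl.1 hi)])
    have hptb : ∀ b, (Q S b)^2 / Sb π t pre b
        ≤ 2*((X b)^2 / Sb π t pre b) + 2*((Y b)^2/ Sb π t pre b) := by
      intro b
      have h1 : (Q S b)^2 ≤ 2*(X b)^2 + 2*(Y b)^2 := by
        rw [hsplit b]
        nlinarith [sq_nonneg (X b - Y b)]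
      calc (Q S b)^2 / Sb π t pre b ≤ (2*(X b)^2 + 2*(Y b)^2) / Sb π t pre b :=
            div_le_div_nonneg_denom h1 (Sb_nonneg hg _ _ _)
        _ = 2*((X b)^2 / Sb π t pre b) + 2*((Y b)^2/ Sb π t pre b) := by
            rw [add_div, mul_div_assoc, mul_div_assoc]
    have hXb : ∑ b, (X b)^2 / Sb π t pre b
        ≤ (4*ρ^2/(k:ℝ)) * ((ℓ:ℝ) * ∑ i ∈ S, (A (S.erase i))^2) := by
      have h1 : ∀ b, (X b)^2 / Sb π t pre b
          ≤ (ℓ:ℝ) * ∑ i ∈ S, (Dlt π t pre b i)^2 * (A (S.erase i))^2 / Sb π t pre b := by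
        intro b
        have h2 : (X b)^2 ≤ (ℓ:ℝ) * ∑ i ∈ S, (Dlt π t pre b i * A (S.erase i))^2 := by
          have := sq_sum_le_card_mul_sum_sq S (fun i => Dlt π t pre b i * A (S.erase i))
          rwa [hcard] at this
        calc (X b)^2 / Sb π t pre b
            ≤ ((ℓ:ℝ) * ∑ i ∈ S, (Dlt π t pre b i * A (S.erase i))^2) / Sb π t pre b :=
              div_le_div_nonneg_denom h2 (Sb_nonneg hg _ _ _)
          _ = (ℓ:ℝ) * ∑ i ∈ S, (Dlt π t pre b i)^2 * (A (S.erase i))^2 / Sb π t pre b := by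
              rw [mul_div_assoc, Finset.sum_div]
              congr 1
              exact Finset.sum_congr rfl (fun i _ => by rw [mul_pow])
      calc ∑ b, (X b)^2 / Sb π t pre b
          ≤ ∑ b, (ℓ:ℝ) * ∑ i ∈ S, (Dlt π t pre b i)^2 * (A (S.erase i))^2 / Sb π t pre b :=
            Finset.sum_le_sum (fun b _ => h1 b)
        _ = (ℓ:ℝ) * ∑ i ∈ S, (A (S.erase i))^2 * ∑ b, (Dlt π t pre b i)^2 / Sb π t pre b := by
            rw [← Finset.mul_sum, Finset.sum_comm]
            congr 1
            refine Finset.sum_congr rfl (fun i _ => ?_)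
            rw [Finset.mul_sum]
            exact Finset.sum_congr rfl (fun b _ => by ring)
        _ ≤ (ℓ:ℝ) * ∑ i ∈ S, (A (S.erase i))^2 * (4*ρ^2/(k:ℝ)) := by
            apply mul_le_mul_of_nonneg_left _ (Nat.cast_nonneg ℓ)
            exact Finset.sum_le_sum (fun i _ =>
              mul_le_mul_of_nonneg_left (diag_bound hg hk hρ0 hρ1 ht pre i) (sq_nonneg _))
        _ = (4*ρ^2/(k:ℝ)) * ((ℓ:ℝ) * ∑ i ∈ S, (A (S.erase i))^2) := by
            rw [← Finset.sum_mul]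
            ring
    have hYb : ∑ b, (Y b)^2 / Sb π t pre b
        ≤ (∑ i ∈ Sᶜ, (A (insert i S))^2) * (4*ρ^2) := by
      have h1 : ∀ b, (Y b)^2 / Sb π t pre b
          ≤ (∑ i ∈ Sᶜ, (A (insert i S))^2) *
              ((∑ i, (Dlt π t pre b i)^2) / Sb π t pre b) := by
        intro b
        have h2 : (Y b)^2 ≤ (∑ i ∈ Sᶜ, (A (insert i S))^2) * (∑ i ∈ Sᶜ, (Dlt π t pre b i)^2) := by
          have h3 := Finset.sum_mul_sq_le_sq_mul_sq Sᶜ (fun i => A (insert i S))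
            (fun i => Dlt π t pre b i)
          calc (Y b)^2 = (∑ i ∈ Sᶜ, A (insert i S) * Dlt π t pre b i)^2 := by
                rw [hY]
                congr 1
                exact Finset.sum_congr rfl (fun i _ => by ring)
            _ ≤ _ := h3
        have h4 : (∑ i ∈ Sᶜ, (Dlt π t pre b i)^2) ≤ ∑ i, (Dlt π t pre b i)^2 :=
          Finset.sum_le_sum_of_subset_of_nonneg (Finset.subset_univ _)
            (fun i _ _ => sq_nonneg _)
        have h5 : (Y b)^2 ≤ (∑ i ∈ Sᶜ, (A (insert i S))^2) * (∑ i, (Dlt π t pre b i)^2) := by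
          calc (Y b)^2 ≤ _ := h2
            _ ≤ _ := mul_le_mul_of_nonneg_left h4
                (Finset.sum_nonneg (fun i _ => sq_nonneg _))
        calc (Y b)^2 / Sb π t pre b
            ≤ ((∑ i ∈ Sᶜ, (A (insert i S))^2) * (∑ i, (Dlt π t pre b i)^2)) / Sb π t pre b :=
              div_le_div_nonneg_denom h5 (Sb_nonneg hg _ _ _)
          _ = (∑ i ∈ Sᶜ, (A (insert i S))^2) *
              ((∑ i, (Dlt π t pre b i)^2) / Sb π t pre b) := by
              rw [mul_div_assoc]
      calc ∑ b, (Y b)^2 / Sb π t pre b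
          ≤ ∑ b, (∑ i ∈ Sᶜ, (A (insert i S))^2) *
              ((∑ i, (Dlt π t pre b i)^2) / Sb π t pre b) :=
            Finset.sum_le_sum (fun b _ => h1 b)
        _ = (∑ i ∈ Sᶜ, (A (insert i S))^2) *
            ∑ b, (∑ i, (Dlt π t pre b i)^2) / Sb π t pre b := by rw [← Finset.mul_sum]
        _ ≤ (∑ i ∈ Sᶜ, (A (insert i S))^2) * (4*ρ^2) :=
            mul_le_mul_of_nonneg_left (trace_bound hg hk hρ0 hρ1 ht pre)
              (Finset.sum_nonneg (fun i _ => sq_nonneg _))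
    calc ∑ b, (Q S b)^2 / Sb π t pre b
        ≤ ∑ b, (2*((X b)^2 / Sb π t pre b) + 2*((Y b)^2/ Sb π t pre b)) :=
          Finset.sum_le_sum (fun b _ => hptb b)
      _ = 2*(∑ b, (X b)^2 / Sb π t pre b) + 2*(∑ b, (Y b)^2 / Sb π t pre b) := by
          rw [Finset.sum_add_distrib, ← Finset.mul_sum, ← Finset.mul_sum]
      _ ≤ 2*((4*ρ^2/(k:ℝ)) * ((ℓ:ℝ) * ∑ i ∈ S, (A (S.erase i))^2))
          + 2*((∑ i ∈ Sᶜ, (A (insert i S))^2) * (4*ρ^2)) := by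
          apply add_le_add
          · exact mul_le_mul_of_nonneg_left hXb (by norm_num)
          · exact mul_le_mul_of_nonneg_left hYb (by norm_num)
      _ = (8*ρ^2/(k:ℝ))*(ℓ:ℝ)*(∑ i ∈ S, (A (S.erase i))^2)
          + 8*ρ^2*(∑ i ∈ Sᶜ, (A (insert i S))^2) := by
          ring
  -- sum the per-S bounds and reindex
  have hE3tot : ∑ S ∈ SSets k ℓ, ∑ b, (Q S b)^2 / Sb π t pre b
      ≤ 8*ρ^2*(ℓ:ℝ) * ∑ T ∈ SSets k (ℓ-1), (A T)^2
        + 8*ρ^2*((ℓ:ℝ)+1) * ∑ T ∈ SSets k (ℓ+1), (A T)^2 := by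
    calc ∑ S ∈ SSets k ℓ, ∑ b, (Q S b)^2 / Sb π t pre b
        ≤ ∑ S ∈ SSets k ℓ, ((8*ρ^2/(k:ℝ))*(ℓ:ℝ)*(∑ i ∈ S, (A (S.erase i))^2)
            + 8*ρ^2*(∑ i ∈ Sᶜ, (A (insert i S))^2)) :=
          Finset.sum_le_sum hQS
      _ = (8*ρ^2/(k:ℝ))*(ℓ:ℝ)*(∑ S ∈ SSets k ℓ, ∑ i ∈ S, (A (S.erase i))^2)
          + 8*ρ^2*(∑ S ∈ SSets k ℓ, ∑ i ∈ Sᶜ, (A (insert i S))^2) := by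
          rw [Finset.sum_add_distrib, ← Finset.mul_sum, ← Finset.mul_sum]
      _ ≤ (8*ρ^2/(k:ℝ))*(ℓ:ℝ)*((k:ℝ) * ∑ T ∈ SSets k (ℓ-1), (A T)^2)
          + 8*ρ^2*(((ℓ:ℝ)+1) * ∑ T ∈ SSets k (ℓ+1), (A T)^2) := by
          apply add_le_add
          · apply mul_le_mul_of_nonneg_left (down_le ℓ (fun T => (A T)^2)
              (fun T => sq_nonneg _))
            positivity
          · rw [up_eq ℓ (fun T => (A T)^2)]
      _ = 8*ρ^2*(ℓ:ℝ) * ∑ T ∈ SSets k (ℓ-1), (A T)^2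
          + 8*ρ^2*((ℓ:ℝ)+1) * ∑ T ∈ SSets k (ℓ+1), (A T)^2 := by
          field_simp
  -- put everything together
  rw [expand, hE1, hE2, zero_add, hE3]
  apply add_le_add (le_refl _)
  calc 2*ε^2/(k:ℝ) * ∑ S ∈ SSets k ℓ, ∑ b, (Q S b)^2 / Sb π t pre b
      ≤ 2*ε^2/(k:ℝ) * (8*ρ^2*(ℓ:ℝ) * ∑ T ∈ SSets k (ℓ-1), (A T)^2
          + 8*ρ^2*((ℓ:ℝ)+1) * ∑ T ∈ SSets k (ℓ+1), (A T)^2) := by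
        apply mul_le_mul_of_nonneg_left hE3tot
        positivity
    _ = 16*ε^2*ρ^2/(k:ℝ) * ((ℓ:ℝ) * ∑ T ∈ SSets k (ℓ-1), (A T)^2
          + ((ℓ:ℝ)+1) * ∑ T ∈ SSets k (ℓ+1), (A T)^2) := by
        field_simp
        ring

lemma phi_succ (hg : GoodProt π ρ) (hk : 0 < k) (hρ0 : 0 ≤ ρ) (hρ1 : ρ ≤ 1)
    (ε : ℝ) {t : ℕ} (ht : t + 1 ≤ n) (ℓ : ℕ) :
    phi ε π ℓ (t+1) ≤ phi ε π ℓ t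
      + 16*ε^2*ρ^2/(k:ℝ) * ((ℓ:ℝ) * phi ε π (ℓ-1) t + ((ℓ:ℝ)+1) * phi ε π (ℓ+1) t) := by
  have htn : t < n := ht
  have hpt : ∀ (pre : Fin t → 𝒴) (b : 𝒴),
      Pz π (uniform2k k) (t+1) (Fin.snoc pre b)
          * ∑ S ∈ SSets k ℓ, (what ε π (t+1) (Fin.snoc pre b) S)^2
      = Pz π (uniform2k k) t pre * (Sb π t pre b / (2*(k:ℝ))
          * ∑ S ∈ SSets k ℓ, (what ε π t pre S
              + ∑ i, dlt ε π t pre b i * what ε π t pre (flipS i S))^2) := by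
    intro pre b
    rw [Pz_snoc, unif_step,
      Finset.sum_congr rfl (fun S (_ : S ∈ SSets k ℓ) => by rw [what_snoc] :
        ∀ S ∈ SSets k ℓ, (what ε π (t+1) (Fin.snoc pre b) S)^2
          = (what ε π t pre S + ∑ i, dlt ε π t pre b i * what ε π t pre (flipS i S))^2)]
    ring
  calc phi ε π ℓ (t+1)
      = ∑ pre : Fin t → 𝒴, Pz π (uniform2k k) t pre
          * ∑ b, (Sb π t pre b / (2*(k:ℝ))
            * ∑ S ∈ SSets k ℓ, (what ε π t pre S
                + ∑ i, dlt ε π t pre b i * what ε π t pre (flipS i S))^2) := by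
        unfold phi
        rw [sum_snoc (fun y => Pz π (uniform2k k) (t+1) y
            * ∑ S ∈ SSets k ℓ, (what ε π (t+1) y S)^2)]
        refine Finset.sum_congr rfl (fun pre _ => ?_)
        rw [Finset.mul_sum]
        exact Finset.sum_congr rfl (fun b _ => hpt pre b)
    _ ≤ ∑ pre : Fin t → 𝒴, Pz π (uniform2k k) t pre
          * ((∑ S ∈ SSets k ℓ, (what ε π t pre S)^2)
            + 16*ε^2*ρ^2/(k:ℝ) * ((ℓ:ℝ) * ∑ T ∈ SSets k (ℓ-1), (what ε π t pre T)^2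
              + ((ℓ:ℝ)+1) * ∑ T ∈ SSets k (ℓ+1), (what ε π t pre T)^2)) := by
        refine Finset.sum_le_sum (fun pre _ => ?_)
        exact mul_le_mul_of_nonneg_left (core_step hg hk hρ0 hρ1 ε htn pre ℓ)
          (Pz_nonneg hg (fun x => by unfold uniform2k; positivity) t pre)
    _ = phi ε π ℓ t
        + 16*ε^2*ρ^2/(k:ℝ) * ((ℓ:ℝ) * phi ε π (ℓ-1) t + ((ℓ:ℝ)+1) * phi ε π (ℓ+1) t) := by
        unfold phi
        rw [Finset.sum_congr rfl (fun pre (_ : pre ∈ univ) => by ring :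
          ∀ pre ∈ univ, Pz π (uniform2k k) t pre
            * ((∑ S ∈ SSets k ℓ, (what ε π t pre S)^2)
              + 16*ε^2*ρ^2/(k:ℝ) * ((ℓ:ℝ) * ∑ T ∈ SSets k (ℓ-1), (what ε π t pre T)^2
                + ((ℓ:ℝ)+1) * ∑ T ∈ SSets k (ℓ+1), (what ε π t pre T)^2))
          = Pz π (uniform2k k) t pre * ∑ S ∈ SSets k ℓ, (what ε π t pre S)^2
            + (16*ε^2*ρ^2/(k:ℝ)*(ℓ:ℝ))
                * (Pz π (uniform2k k) t pre * ∑ T ∈ SSets k (ℓ-1), (what ε π t pre T)^2)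
            + (16*ε^2*ρ^2/(k:ℝ)*((ℓ:ℝ)+1))
                * (Pz π (uniform2k k) t pre * ∑ T ∈ SSets k (ℓ+1), (what ε π t pre T)^2)),
          Finset.sum_add_distrib, Finset.sum_add_distrib, ← Finset.mul_sum, ← Finset.mul_sum]
        ring

/-- the comparison sequence -/
noncomputable def useq (g : ℝ) : ℕ → ℝ
  | 0 => 1
  | (t+1) => useq g t * (1 + 2*g^2*t)

lemma useq_nonneg {g : ℝ} : ∀ t, 0 ≤ useq g t := by
  intro t
  induction t with
  | zero => norm_num [useq]
  | succ t ih =>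
    rw [useq]
    apply mul_nonneg ih
    positivity

lemma binom_two (a b : ℝ) (ha : 0 ≤ a) (hb : 0 ≤ b) (m : ℕ) :
    a^(m+1) + ((m:ℝ)+1)*a^m*b ≤ (a+b)^(m+1) := by
  induction m with
  | zero => norm_num
  | succ m ih =>
    have h1 : (a+b)*(a^(m+1) + ((m:ℝ)+1)*a^m*b) ≤ (a+b)*(a+b)^(m+1) :=
      mul_le_mul_of_nonneg_left ih (by linarith)
    have h2 : (a+b)^(m+1+1) = (a+b)*(a+b)^(m+1) := by ring
    rw [h2]
    have key : (a+b)*(a^(m+1) + ((m:ℝ)+1)*a^m*b)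
        = a^(m+1+1) + ((m:ℝ)+1+1)*a^(m+1)*b + ((m:ℝ)+1)*a^m*b^2 := by ring
    have hsl : 0 ≤ ((m:ℝ)+1)*a^m*b^2 := by positivity
    push_cast
    push_cast at h1 key
    linarith

lemma step_algebra {g u β : ℝ} (hg0 : 0 ≤ g) (hu : 0 ≤ u) (hβ0 : 0 ≤ β) (hβ1 : β ≤ 1)
    (ℓ : ℕ) :
    u*β^ℓ + g*((ℓ:ℝ)*u*β^(ℓ-1) + ((ℓ:ℝ)+1)*u*β^(ℓ+1))
      ≤ u*(1+g*β)*(β+2*g)^ℓ := by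
  cases ℓ with
  | zero =>
    norm_num
    nlinarith [mul_nonneg hu (mul_nonneg hg0 hβ0)]
  | succ m =>
    have hbinom : β^(m+1) + ((m:ℝ)+1)*β^m*(2*g) ≤ (β+2*g)^(m+1) :=
      binom_two β (2*g) hβ0 (by linarith) m
    have hfac : 0 ≤ u*(1+g*β) := by nlinarith [mul_nonneg hg0 hβ0]
    have hchain : u*(1+g*β)*(β^(m+1) + ((m:ℝ)+1)*β^m*(2*g))
        ≤ u*(1+g*β)*(β+2*g)^(m+1) :=
      mul_le_mul_of_nonneg_left hbinom hfac
    have hβ2 : β^2 ≤ 1 := by nlinarith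
    have key : u*(1+g*β)*(β^(m+1) + ((m:ℝ)+1)*β^m*(2*g))
        = u*β^(m+1) + g*(((m:ℝ)+1)*u*β^m + (((m:ℝ)+1)+1)*u*β^(m+1+1))
          + (u*g*β^m*(1-β^2) + u*g*β^m*(m:ℝ)*(1-β^2)
            + 2*u*g^2*β^m*β + 2*u*g^2*β^m*β*(m:ℝ)) := by
      ring
    have hslack : 0 ≤ u*g*β^m*(1-β^2) + u*g*β^m*(m:ℝ)*(1-β^2)
        + 2*u*g^2*β^m*β + 2*u*g^2*β^m*β*(m:ℝ) := by
      have hβm : 0 ≤ β^m := pow_nonneg hβ0 m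
      have h1 : 0 ≤ 1 - β^2 := by linarith
      have hm : 0 ≤ (m:ℝ) := Nat.cast_nonneg m
      apply add_nonneg
      apply add_nonneg
      apply add_nonneg
      · positivity
      · positivity
      · positivity
      · positivity
    have hsub : ((m+1:ℕ):ℝ) = (m:ℝ)+1 := by push_cast; ring
    have hpred : (m+1) - 1 = m := rfl
    rw [hpred]
    push_cast
    nlinarith [hchain, key, hslack]

lemma phi_bound (hg : GoodProt π ρ) (hk : 0 < k) (hρ0 : 0 ≤ ρ) (hρ1 : ρ ≤ 1) (ε : ℝ)
    (hgn : 2 * (16*ε^2*ρ^2/(k:ℝ)) * n ≤ 1) :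
    ∀ t, t ≤ n → ∀ ℓ, phi ε π ℓ t
      ≤ useq (16*ε^2*ρ^2/(k:ℝ)) t * (2*(16*ε^2*ρ^2/(k:ℝ))*(t:ℝ))^ℓ := by
  have hkR : (0:ℝ) < k := by exact_mod_cast hk
  set g : ℝ := 16*ε^2*ρ^2/(k:ℝ) with hgdef
  have hg0 : 0 ≤ g := by positivity
  intro t
  induction t with
  | zero =>
    intro _ ℓ
    rw [phi_zero]
    cases ℓ with
    | zero => simp [useq]
    | succ m =>
      simp only [Nat.cast_zero, mul_zero, Nat.succ_ne_zero, if_false]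
      rw [zero_pow (Nat.succ_ne_zero m), mul_zero]
  | succ t ih =>
    intro ht ℓ
    have htle : t ≤ n := le_of_lt ht
    have htn : (t:ℝ) ≤ (n:ℝ) := by exact_mod_cast htle
    set β : ℝ := 2*g*(t:ℝ) with hβdef
    have hβ0 : 0 ≤ β := by positivity
    have hβ1 : β ≤ 1 := by
      calc β = 2*g*(t:ℝ) := rfl
        _ ≤ 2*g*(n:ℝ) := by
            apply mul_le_mul_of_nonneg_left htn
            positivity
        _ ≤ 1 := hgn
    have hu0 : 0 ≤ useq g t := useq_nonneg t
    calc phi ε π ℓ (t+1)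
        ≤ phi ε π ℓ t + g * ((ℓ:ℝ) * phi ε π (ℓ-1) t + ((ℓ:ℝ)+1) * phi ε π (ℓ+1) t) :=
          phi_succ hg hk hρ0 hρ1 ε ht ℓ
      _ ≤ useq g t * β^ℓ + g * ((ℓ:ℝ) * (useq g t * β^(ℓ-1))
            + ((ℓ:ℝ)+1) * (useq g t * β^(ℓ+1))) := by
          apply add_le_add (ih htle ℓ)
          apply mul_le_mul_of_nonneg_left _ hg0
          apply add_le_add
          · exact mul_le_mul_of_nonneg_left (ih htle (ℓ-1)) (Nat.cast_nonneg ℓ)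
          · exact mul_le_mul_of_nonneg_left (ih htle (ℓ+1)) (by positivity)
      _ = useq g t * β^ℓ + g*((ℓ:ℝ)*(useq g t)*β^(ℓ-1) + ((ℓ:ℝ)+1)*(useq g t)*β^(ℓ+1)) := by
          ring
      _ ≤ useq g t * (1+g*β)*(β+2*g)^ℓ := step_algebra hg0 hu0 hβ0 hβ1 ℓ
      _ = useq g (t+1) * (2*g*((t+1:ℕ):ℝ))^ℓ := by
          rw [show useq g (t+1) = useq g t * (1 + 2*g^2*(t:ℝ)) from rfl,
            show (2*g*((t+1:ℕ):ℝ)) = β + 2*g by rw [hβdef]; push_cast; ring]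
          ring

lemma useq_le {g : ℝ} (hg0 : 0 ≤ g) : ∀ t : ℕ, 2*g*(t:ℝ) ≤ 1 → useq g t ≤ 1 + 4*(g*t)^2 := by
  intro t
  induction t with
  | zero => intro _; norm_num [useq]
  | succ t ih =>
    intro ht
    have ht' : 2*g*(t:ℝ) ≤ 1 := by
      have : (t:ℝ) ≤ ((t+1:ℕ):ℝ) := by push_cast; linarith
      calc 2*g*(t:ℝ) ≤ 2*g*((t+1:ℕ):ℝ) := by
            apply mul_le_mul_of_nonneg_left this
            positivity
        _ ≤ 1 := ht
    have h1 : useq g (t+1) = useq g t * (1 + 2*g^2*(t:ℝ)) := rfl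
    have h2 := ih ht'
    have hgt0 : 0 ≤ g*(t:ℝ) := by positivity
    have hsq : (2*g*(t:ℝ))^2 ≤ 1 := by nlinarith
    rw [h1]
    push_cast
    nlinarith [mul_nonneg (mul_nonneg hg0 hg0) (Nat.cast_nonneg t), useq_nonneg (g := g) t,
      sq_nonneg (g*(t:ℝ))]

lemma SSets_zero : SSets k 0 = {(∅ : Finset (Fin k))} := by
  ext S
  rw [mem_SSets, Finset.mem_singleton, Finset.card_eq_zero]

lemma phi_zero_form (ε : ℝ) (t : ℕ) :
    phi ε π 0 t = ∑ y : Fin t → 𝒴, Pz π (uniform2k k) t y * (what ε π t y ∅)^2 := by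
  unfold phi
  refine Finset.sum_congr rfl (fun y _ => ?_)
  rw [SSets_zero, Finset.sum_singleton]

lemma what_empty (ε : ℝ) (t : ℕ) (y : Fin t → 𝒴) :
    what ε π t y ∅ = (∑ z : Fin k → Bool, wfun ε π t y z) / 2^k := by
  unfold what
  congr 1
  exact Finset.sum_congr rfl (fun z _ => by rw [Finset.prod_empty, mul_one])

lemma what_mean (hg : GoodProt π ρ) {ε : ℝ} (hpan : ∀ z, IsDist (paninski k ε z)) :
    ∑ y : Fin n → 𝒴, Pz π (uniform2k k) n y * what ε π n y ∅ = 1 := by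
  have h1 : ∀ y : Fin n → 𝒴, Pz π (uniform2k k) n y * what ε π n y ∅
      = (∑ z : Fin k → Bool, Pz π (paninski k ε z) n y) / 2^k := by
    intro y
    rw [what_empty, ← mul_div_assoc]
    congr 1
    rw [Finset.mul_sum]
    exact Finset.sum_congr rfl (fun z _ => (Pz_link hg n y z).symm)
  rw [Finset.sum_congr rfl (fun y _ => h1 y), ← Finset.sum_div, Finset.sum_comm]
  have h2 : ∀ z ∈ (univ : Finset (Fin k → Bool)), ∑ y : Fin n → 𝒴, Pz π (paninski k ε z) n y = 1 :=
    fun z _ => Pz_mass hg (hpan z) n le_rfl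
  rw [Finset.sum_congr rfl h2, Finset.sum_const, Finset.card_univ, Fintype.card_fun,
    nsmul_eq_mul, mul_one]
  rw [div_eq_one_iff_eq (by positivity)]
  push_cast
  simp

end Machinery

lemma paninski_abs {k : ℕ} {ε : ℝ} (hε : 0 ≤ ε) (z : Fin k → Bool) (x : Fin (2*k)) :
    |(if x.val % 2 = 0 then (1:ℝ) else -1) * (2 * ε) *
      pm (z ⟨x.val / 2, by have := x.isLt; omega⟩)| = 2*ε := by
  rw [abs_mul, abs_mul, abs_pm, mul_one]
  have h1 : |(if x.val % 2 = 0 then (1:ℝ) else -1)| = 1 := by split <;> norm_num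
  rw [h1, one_mul, abs_of_nonneg (by linarith)]

lemma paninski_isDist {k : ℕ} {ε : ℝ} (hk : 0 < k) (hε : 0 ≤ ε) (hε2 : ε ≤ 1/4)
    (z : Fin k → Bool) : IsDist (paninski k ε z) := by
  have hkR : (0:ℝ) < k := by exact_mod_cast hk
  constructor
  · intro x
    unfold paninski
    apply div_nonneg _ (by positivity)
    have := paninski_abs hε z x
    have h2 := neg_abs_le ((if x.val % 2 = 0 then (1:ℝ) else -1) * (2 * ε) *
      pm (z ⟨x.val / 2, by have := x.isLt; omega⟩))
    rw [this] at h2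
    linarith
  · rw [sum_pair (paninski k ε z)]
    have h1 : ∀ i : Fin k, paninski k ε z (lo i) + paninski k ε z (hi i) = 1/(k:ℝ) := by
      intro i
      rw [paninski_lo, paninski_hi, ← add_div]
      rw [show (1 + 2*ε*pm (z i) + (1 - 2*ε*pm (z i))) = 2 by ring]
      rw [div_eq_div_iff (by positivity) (ne_of_gt hkR)]
      ring
    rw [Finset.sum_congr rfl (fun i _ => h1 i), Finset.sum_const, Finset.card_univ,
      Fintype.card_fin, nsmul_eq_mul]
    field_simp

lemma paninski_tv {k : ℕ} {ε : ℝ} (hk : 0 < k) (hε : 0 ≤ ε) (z : Fin k → Bool) :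
    tvDist (paninski k ε z) (uniform2k k) = ε := by
  have hkR : (0:ℝ) < k := by exact_mod_cast hk
  have key : ∀ B : ℝ, (1 + B)/(2*(k:ℝ)) - (2*(k:ℝ))⁻¹ = B/(2*(k:ℝ)) := by
    intro B
    field_simp
    ring
  unfold tvDist
  have h1 : ∀ x : Fin (2*k), |paninski k ε z x - uniform2k k x| = 2*ε/(2*(k:ℝ)) := by
    intro x
    unfold paninski uniform2k
    rw [key, abs_div, paninski_abs hε z x, abs_of_pos (by positivity : (0:ℝ) < 2*(k:ℝ))]
  rw [Finset.sum_congr rfl (fun x _ => h1 x), Finset.sum_const, Finset.card_univ,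
    Fintype.card_fin, nsmul_eq_mul]
  push_cast
  field_simp

lemma uniform_isDist {k : ℕ} (hk : 0 < k) : IsDist (uniform2k k) := by
  have hkR : (0:ℝ) < k := by exact_mod_cast hk
  constructor
  · intro x
    unfold uniform2k
    positivity
  · unfold uniform2k
    rw [Finset.sum_const, Finset.card_univ, Fintype.card_fin, nsmul_eq_mul]
    push_cast
    field_simp


set_option maxHeartbeats 2000000 in
/-- Lower bound for interactive uniformity testing under
`ρ`-local differential privacy: any `(n, ε)`-uniformity test using `𝒲_ρ` needs
`n ≥ c · k / (ε² · ρ²)`. -/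
theorem testing_lower_bound_ldp :
    ∃ ε₀ c : ℝ, (0 < ε₀ ∧ ε₀ ≤ 1) ∧ 0 < c ∧
      ∀ (k : ℕ), 1 ≤ k →
      ∀ ε : ℝ, 0 < ε → ε ≤ ε₀ →
      ∀ ρ : ℝ, 0 < ρ → ρ ≤ 1 →
      ∀ (𝒴 𝒰 : Type) [Fintype 𝒴] [Fintype 𝒰],
      ∀ (n : ℕ) (μ : 𝒰 → ℝ) (π : 𝒰 → Protocol k n 𝒴)
        (T : (Fin n → 𝒴) → 𝒰 → ℝ),
        IsUnifTest (ldpFamily k (𝒴 := 𝒴) ρ) μ π T ε →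
        c * (k : ℝ) / (ε ^ 2 * ρ ^ 2) ≤ (n : ℝ) := by
  refine ⟨1/4, 1/256, ⟨by norm_num, by norm_num⟩, by norm_num, ?_⟩
  intro k hk1 ε hε0 hεle ρ hρ0 hρ1 𝒴 𝒰 _ _ n μ π T htest
  by_contra hcon
  push_neg at hcon
  obtain ⟨hμ, huse, hch, hT, hcomp, hsound⟩ := htest
  have hk : 0 < k := hk1
  have hkR : (0:ℝ) < k := by exact_mod_cast hk
  have hgood : ∀ u, GoodProt (π u) ρ :=
    fun u => ⟨fun t pre => (huse u t pre).1, fun t pre x x' y => (huse u t pre).2 x x' y⟩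
  have hpan : ∀ z : Fin k → Bool, IsDist (paninski k ε z) :=
    fun z => paninski_isDist hk (le_of_lt hε0) (by linarith) z
  have hsz : ∀ z : Fin k → Bool, 99/100 ≤ ∑ u, ∑ y : Fin n → 𝒴,
      μ u * (transDist (π u) (paninski k ε z) y * T y u) :=
    fun z => hsound _ (hpan z) (le_of_eq (paninski_tv hk (le_of_lt hε0) z).symm)
  have htrans : ∀ (u : 𝒰) (p : Fin (2*k) → ℝ) (y : Fin n → 𝒴),
      transDist (π u) p y = Pz (π u) p n y :=
    fun u p y => prefix_eq_Pz (π u) p n le_rfl y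
  have h2k : (0:ℝ) < 2^k := by positivity
  -- averaged soundness
  have havg : 99/100 ≤ ∑ u, ∑ y : Fin n → 𝒴,
      μ u * ((Pz (π u) (uniform2k k) n y * what ε (π u) n y ∅) * T y u) := by
    have hsum : (2:ℝ)^k * (99/100) ≤ ∑ z : Fin k → Bool, ∑ u, ∑ y : Fin n → 𝒴,
        μ u * (transDist (π u) (paninski k ε z) y * T y u) := by
      calc (2:ℝ)^k * (99/100) = ∑ _z : Fin k → Bool, (99/100:ℝ) := by
            rw [Finset.sum_const, Finset.card_univ, Fintype.card_fun, nsmul_eq_mul]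
            push_cast
            simp
        _ ≤ _ := Finset.sum_le_sum (fun z _ => hsz z)
    have hid : ∑ z : Fin k → Bool, ∑ u, ∑ y : Fin n → 𝒴,
        μ u * (transDist (π u) (paninski k ε z) y * T y u)
        = 2^k * ∑ u, ∑ y : Fin n → 𝒴,
            μ u * ((Pz (π u) (uniform2k k) n y * what ε (π u) n y ∅) * T y u) := by
      rw [Finset.sum_comm, Finset.mul_sum]
      refine Finset.sum_congr rfl (fun u _ => ?_)
      rw [Finset.sum_comm, Finset.mul_sum]
      refine Finset.sum_congr rfl (fun y _ => ?_)
      have e2 : ∀ z : Fin k → Bool,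
          μ u * (transDist (π u) (paninski k ε z) y * T y u)
          = (μ u * T y u) * Pz (π u) (paninski k ε z) n y := by
        intro z
        rw [htrans]
        ring
      rw [Finset.sum_congr rfl (fun z _ => e2 z), ← Finset.mul_sum]
      have e3 : ∑ z : Fin k → Bool, Pz (π u) (paninski k ε z) n y
          = 2^k * (Pz (π u) (uniform2k k) n y * what ε (π u) n y ∅) := by
        rw [Finset.sum_congr rfl (fun z _ => Pz_link (hgood u) n y z), ← Finset.mul_sum,
          what_empty]
        field_simp
      rw [e3]
      ring
    rw [hid] at hsum
    exact (mul_le_mul_iff_right₀ h2k).1 hsum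
  -- completeness side
  have hcomp2 : ∑ u, μ u * ∑ y : Fin n → 𝒴, Pz (π u) (uniform2k k) n y * T y u ≤ 1/100 := by
    have hmassu : ∀ u, ∑ y : Fin n → 𝒴, Pz (π u) (uniform2k k) n y = 1 :=
      fun u => Pz_mass (hgood u) (uniform_isDist hk) n le_rfl
    have hexp : ∑ u, ∑ y : Fin n → 𝒴, μ u * (transDist (π u) (uniform2k k) y * (1 - T y u))
        = ∑ u, μ u * (1 - ∑ y : Fin n → 𝒴, Pz (π u) (uniform2k k) n y * T y u) := by
      refine Finset.sum_congr rfl (fun u _ => ?_)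
      have e1 : ∀ y : Fin n → 𝒴, μ u * (transDist (π u) (uniform2k k) y * (1 - T y u))
          = μ u * (Pz (π u) (uniform2k k) n y)
            - μ u * (Pz (π u) (uniform2k k) n y * T y u) := by
        intro y
        rw [htrans]
        ring
      rw [Finset.sum_congr rfl (fun y _ => e1 y), Finset.sum_sub_distrib,
        ← Finset.mul_sum, ← Finset.mul_sum, hmassu u]
      ring
    rw [hexp] at hcomp
    have h1 : ∑ u, μ u * (1 - ∑ y : Fin n → 𝒴, Pz (π u) (uniform2k k) n y * T y u)
        = 1 - ∑ u, μ u * ∑ y : Fin n → 𝒴, Pz (π u) (uniform2k k) n y * T y u := by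
      rw [Finset.sum_congr rfl (fun u (_ : u ∈ univ) => by ring :
          ∀ u ∈ (univ : Finset 𝒰), μ u * (1 - ∑ y : Fin n → 𝒴,
            Pz (π u) (uniform2k k) n y * T y u)
          = μ u - μ u * ∑ y : Fin n → 𝒴, Pz (π u) (uniform2k k) n y * T y u),
        Finset.sum_sub_distrib, hμ.2]
    rw [h1] at hcomp
    linarith
  -- difference bound
  have hD : 98/100 ≤ ∑ u, μ u * ∑ y : Fin n → 𝒴,
      (Pz (π u) (uniform2k k) n y * what ε (π u) n y ∅
        - Pz (π u) (uniform2k k) n y) * T y u := by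
    have e1 : ∀ u : 𝒰, μ u * ∑ y : Fin n → 𝒴,
        (Pz (π u) (uniform2k k) n y * what ε (π u) n y ∅
          - Pz (π u) (uniform2k k) n y) * T y u
        = (∑ y : Fin n → 𝒴, μ u * ((Pz (π u) (uniform2k k) n y * what ε (π u) n y ∅) * T y u))
          - μ u * ∑ y : Fin n → 𝒴, Pz (π u) (uniform2k k) n y * T y u := by
      intro u
      rw [Finset.mul_sum, Finset.mul_sum, ← Finset.sum_sub_distrib]
      exact Finset.sum_congr rfl (fun y _ => by ring)
    rw [Finset.sum_congr rfl (fun u _ => e1 u), Finset.sum_sub_distrib]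
    linarith [havg, hcomp2]
  -- extract a good seed
  have hexu : ∃ u : 𝒰, 97/100 ≤ ∑ y : Fin n → 𝒴,
      (Pz (π u) (uniform2k k) n y * what ε (π u) n y ∅
        - Pz (π u) (uniform2k k) n y) * T y u := by
    by_contra hno
    push_neg at hno
    have hle : ∑ u, μ u * ∑ y : Fin n → 𝒴,
        (Pz (π u) (uniform2k k) n y * what ε (π u) n y ∅
          - Pz (π u) (uniform2k k) n y) * T y u
        ≤ ∑ u, μ u * (97/100) :=
      Finset.sum_le_sum (fun u _ => mul_le_mul_of_nonneg_left (le_of_lt (hno u)) (hμ.1 u))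
    rw [← Finset.sum_mul, hμ.2, one_mul] at hle
    linarith
  obtain ⟨u, hu⟩ := hexu
  -- chi-square analysis for this protocol
  have hPnn : ∀ y : Fin n → 𝒴, 0 ≤ Pz (π u) (uniform2k k) n y :=
    fun y => Pz_nonneg (hgood u) (uniform_isDist hk).1 n y
  have hPm : ∑ y : Fin n → 𝒴, Pz (π u) (uniform2k k) n y = 1 :=
    Pz_mass (hgood u) (uniform_isDist hk) n le_rfl
  have hPW : ∑ y : Fin n → 𝒴, Pz (π u) (uniform2k k) n y * what ε (π u) n y ∅ = 1 :=
    what_mean (hgood u) hpan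
  have hDle : ∑ y : Fin n → 𝒴,
      (Pz (π u) (uniform2k k) n y * what ε (π u) n y ∅
        - Pz (π u) (uniform2k k) n y) * T y u
      ≤ ∑ y : Fin n → 𝒴, Pz (π u) (uniform2k k) n y * |what ε (π u) n y ∅ - 1| := by
    refine Finset.sum_le_sum (fun y _ => ?_)
    have hxabs : |Pz (π u) (uniform2k k) n y * what ε (π u) n y ∅
        - Pz (π u) (uniform2k k) n y|
        = Pz (π u) (uniform2k k) n y * |what ε (π u) n y ∅ - 1| := by
      rw [show Pz (π u) (uniform2k k) n y * what ε (π u) n y ∅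
          - Pz (π u) (uniform2k k) n y
          = Pz (π u) (uniform2k k) n y * (what ε (π u) n y ∅ - 1) by ring,
        abs_mul, abs_of_nonneg (hPnn y)]
    rw [← hxabs]
    rcases le_or_gt 0 (Pz (π u) (uniform2k k) n y * what ε (π u) n y ∅
        - Pz (π u) (uniform2k k) n y) with hx0 | hx0
    · calc (Pz (π u) (uniform2k k) n y * what ε (π u) n y ∅
          - Pz (π u) (uniform2k k) n y) * T y u
          ≤ (Pz (π u) (uniform2k k) n y * what ε (π u) n y ∅
            - Pz (π u) (uniform2k k) n y) * 1 :=
            mul_le_mul_of_nonneg_left (hT y u).2 hx0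
        _ ≤ |Pz (π u) (uniform2k k) n y * what ε (π u) n y ∅
            - Pz (π u) (uniform2k k) n y| := by rw [mul_one]; exact le_abs_self _
    · calc (Pz (π u) (uniform2k k) n y * what ε (π u) n y ∅
          - Pz (π u) (uniform2k k) n y) * T y u ≤ 0 :=
            mul_nonpos_of_nonpos_of_nonneg (le_of_lt hx0) (hT y u).1
        _ ≤ _ := abs_nonneg _
  have hCS : (∑ y : Fin n → 𝒴, Pz (π u) (uniform2k k) n y * |what ε (π u) n y ∅ - 1|)^2
      ≤ (∑ y : Fin n → 𝒴, Pz (π u) (uniform2k k) n y) *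
        (∑ y : Fin n → 𝒴, Pz (π u) (uniform2k k) n y * (what ε (π u) n y ∅ - 1)^2) := by
    have h := Finset.sum_mul_sq_le_sq_mul_sq (univ : Finset (Fin n → 𝒴))
      (fun y => Real.sqrt (Pz (π u) (uniform2k k) n y))
      (fun y => Real.sqrt (Pz (π u) (uniform2k k) n y) * |what ε (π u) n y ∅ - 1|)
    have e1 : ∀ y : Fin n → 𝒴, Real.sqrt (Pz (π u) (uniform2k k) n y) *
        (Real.sqrt (Pz (π u) (uniform2k k) n y) * |what ε (π u) n y ∅ - 1|)
        = Pz (π u) (uniform2k k) n y * |what ε (π u) n y ∅ - 1| := by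
      intro y
      rw [← mul_assoc, Real.mul_self_sqrt (hPnn y)]
    have e2 : ∀ y : Fin n → 𝒴, (Real.sqrt (Pz (π u) (uniform2k k) n y))^2
        = Pz (π u) (uniform2k k) n y := fun y => Real.sq_sqrt (hPnn y)
    have e3 : ∀ y : Fin n → 𝒴,
        (Real.sqrt (Pz (π u) (uniform2k k) n y) * |what ε (π u) n y ∅ - 1|)^2
        = Pz (π u) (uniform2k k) n y * (what ε (π u) n y ∅ - 1)^2 := by
      intro y
      rw [mul_pow, Real.sq_sqrt (hPnn y), sq_abs]
    rw [Finset.sum_congr rfl (fun y _ => e1 y), Finset.sum_congr rfl (fun y _ => e2 y),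
      Finset.sum_congr rfl (fun y _ => e3 y)] at h
    exact h
  have hvar : ∑ y : Fin n → 𝒴, Pz (π u) (uniform2k k) n y * (what ε (π u) n y ∅ - 1)^2
      = phi ε (π u) 0 n - 1 := by
    have e1 : ∀ y : Fin n → 𝒴, Pz (π u) (uniform2k k) n y * (what ε (π u) n y ∅ - 1)^2
        = Pz (π u) (uniform2k k) n y * (what ε (π u) n y ∅)^2
          - 2*(Pz (π u) (uniform2k k) n y * what ε (π u) n y ∅)
          + Pz (π u) (uniform2k k) n y := fun y => by ring
    rw [Finset.sum_congr rfl (fun y _ => e1 y), Finset.sum_add_distrib,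
      Finset.sum_sub_distrib, ← Finset.mul_sum, hPW, hPm, phi_zero_form]
    ring
  -- the recursion bound
  have hq : (0:ℝ) < ε^2*ρ^2 := by positivity
  have hcon' : (n:ℝ) * (ε^2*ρ^2) < 1/256 * k := by
    rw [lt_div_iff₀ hq] at hcon
    linarith
  have hgn1 : 16*ε^2*ρ^2/(k:ℝ) * n ≤ 1/16 := by
    rw [div_mul_eq_mul_div, div_le_div_iff₀ hkR (by norm_num : (0:ℝ) < 16)]
    nlinarith
  have hgn2 : 2*(16*ε^2*ρ^2/(k:ℝ))*n ≤ 1 := by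
    have heq : 2*(16*ε^2*ρ^2/(k:ℝ))*(n:ℝ) = 2*(16*ε^2*ρ^2/(k:ℝ)*(n:ℝ)) := by ring
    rw [heq]
    linarith
  have hphi : phi ε (π u) 0 n ≤ 1 + 1/64 := by
    have h1 := phi_bound (hgood u) hk (le_of_lt hρ0) hρ1 ε hgn2 n le_rfl 0
    rw [pow_zero, mul_one] at h1
    have h2 := useq_le (g := 16*ε^2*ρ^2/(k:ℝ)) (by positivity) n hgn2
    have h3 : (16*ε^2*ρ^2/(k:ℝ)*(n:ℝ))^2 ≤ (1/16)^2 :=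
      pow_le_pow_left₀ (by positivity) hgn1 2
    nlinarith [h1, h2, h3]
  -- contradiction
  have hTV : (97:ℝ)/100 ≤ ∑ y : Fin n → 𝒴,
      Pz (π u) (uniform2k k) n y * |what ε (π u) n y ∅ - 1| := le_trans hu hDle
  have hTVnn : (0:ℝ) ≤ ∑ y : Fin n → 𝒴,
      Pz (π u) (uniform2k k) n y * |what ε (π u) n y ∅ - 1| :=
    Finset.sum_nonneg (fun y _ => mul_nonneg (hPnn y) (abs_nonneg _))
  nlinarith [hCS, hvar, hphi, hTV, hPm, mul_le_mul hTV hTV (by norm_num) hTVnn]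


end Paper
end

section
/- Let Z be uniformly distributed on {−1,+1}^k (i.e., with independent Rademacher coordinates) and let Y be a random variable taking finitely many values jointly distributed with Z. Then for every i ∈ {1,…,k}, I(Z_i; Y) ≥ (1/(2 ln 2)) · E[ (E[Z_i | Y])² ], and consequently (1/k) Σ_{i=1}^k I(Z_i; Y) ≥ (1/(2 ln 2)) · (1 − mmse(Z|Y)/k). Here mutual information is measured in bits. -/
open Finset

namespace Paper

/-! `Z_i` is a uniform bit, so `I(Z_i; Y)` averages over `y` the divergence of the law of `Z_i`
given `Y = y` from the uniform bit, i.e. `log 2 - h(p_y)` nats with `2 p_y - 1 = E[Z_i | Y = y]`.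
The sharp binary Pinsker bound `log 2 - h(p) ≥ (2p - 1)² / 2` gives the first claim. For the
second, `Z_i² = 1` makes the conditional bias–variance decomposition read
`E[(Z_i - c)² | Y] ≥ 1 - E[Z_i | Y]²` for every estimate `c`, so summing over `i` bounds
`Σ_i E[E[Z_i | Y]²]` below by `k - mmse(Z | Y)`. -/

open Real

lemma two_mul_le_log_one_add_sub_log_one_sub {x : ℝ} (hx₀ : 0 ≤ x) (hx₁ : x < 1) :
    2 * x ≤ log (1 + x) - log (1 - x) := by
  have hs := hasSum_log_sub_log_of_abs_lt_one (abs_lt.mpr ⟨by linarith, hx₁⟩)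
  simpa using le_hasSum hs 0 fun n _ => by positivity

lemma binEntropy_le_log_two_sub_sq {p : ℝ} (hp₀ : 0 ≤ p) (hp₁ : p ≤ 1) :
    binEntropy p ≤ log 2 - (2 * p - 1) ^ 2 / 2 := by
  wlog hp : 2⁻¹ ≤ p generalizing p
  · simpa [show (2 * (1 - p) - 1) ^ 2 = (2 * p - 1) ^ 2 by ring]
      using this (p := 1 - p) (by linarith) (by linarith) (by linarith)
  set F : ℝ → ℝ := fun p => log 2 - (2 * p - 1) ^ 2 / 2 - binEntropy p
  have hF : MonotoneOn F (Set.Icc 2⁻¹ 1) := by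
    refine monotoneOn_of_hasDerivWithinAt_nonneg
      (f' := fun p => log p - log (1 - p) - 2 * (2 * p - 1))
      (convex_Icc _ _) (by fun_prop) (fun p hp => ?_) (fun p hp => ?_)
    · rw [interior_Icc] at hp
      have hb := hasDerivAt_binEntropy (p := p) (by linarith [hp.1]) (by linarith [hp.2])
      have hq := ((((hasDerivAt_id p).const_mul 2).sub_const 1).pow 2).div_const 2
      exact ((hq.const_sub (log 2)).sub hb).hasDerivWithinAt.congr_deriv (by simp; ring)
    · rw [interior_Icc] at hp
      have h := two_mul_le_log_one_add_sub_log_one_sub (x := 2 * p - 1)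
        (by linarith [hp.1]) (by linarith [hp.2])
      rw [show 1 + (2 * p - 1) = 2 * p by ring, show 1 - (2 * p - 1) = 2 * (1 - p) by ring,
        log_mul two_ne_zero (by linarith [hp.1]), log_mul two_ne_zero (by linarith [hp.2])] at h
      linarith
  have hmono := hF ⟨le_rfl, by norm_num⟩ ⟨hp, hp₁⟩ hp
  simp only [F, binEntropy_two_inv] at hmono
  norm_num at hmono
  linarith

lemma sq_sub_div_le_mul_log_add_mul_log {p q : ℝ} (hp : 0 ≤ p) (hq : 0 ≤ q) :
    (p - q) ^ 2 / (p + q) / 2 ≤ p * log (p / ((p + q) / 2)) + q * log (q / ((p + q) / 2)) := by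
  rcases (add_nonneg hp hq).eq_or_lt with hs | hs
  · obtain rfl : p = 0 := by linarith
    obtain rfl : q = 0 := by linarith
    simp
  have hlog : ∀ x : ℝ, 0 ≤ x →
      x * log (x / ((p + q) / 2)) = x * log 2 - (p + q) * negMulLog (x / (p + q)) := fun x hx => by
    rcases hx.eq_or_lt with rfl | hx
    · simp
    · rw [negMulLog, div_div_eq_mul_div, log_div (by positivity) hs.ne',
        log_mul hx.ne' two_ne_zero, log_div hx.ne' hs.ne']
      field_simp
      ring
  have hbin := binEntropy_le_log_two_sub_sq (p := p / (p + q)) (by positivity)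
    (div_le_one_of_le₀ (by linarith) hs.le)
  rw [binEntropy_eq_negMulLog_add_negMulLog_one_sub, show 1 - p / (p + q) = q / (p + q) by
    field_simp; ring] at hbin
  rw [hlog p hp, hlog q hq]
  have hsq : (p - q) ^ 2 / (p + q) / 2 = (p + q) * ((2 * (p / (p + q)) - 1) ^ 2 / 2) := by
    field_simp; ring
  rw [hsq]
  linarith [mul_le_mul_of_nonneg_left hbin hs.le]

lemma sum_sq_sub_div_le_miBits {𝒴 : Type*} [Fintype 𝒴] (q : Bool → 𝒴 → ℝ)
    (hq : ∀ b y, 0 ≤ q b y) (hhalf : ∀ b, ∑ y, q b y = 1 / 2) :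
    1 / (2 * log 2) * ∑ y, (q true y - q false y) ^ 2 / (q true y + q false y) ≤ miBits q := by
  have hlog2 : 0 < log 2 := log_pos one_lt_two
  simp only [miBits, hhalf, Fintype.sum_bool, ← sum_add_distrib, mul_sum]
  refine sum_le_sum fun y _ => ?_
  have h := sq_sub_div_le_mul_log_add_mul_log (hq true y) (hq false y)
  simp only [logb, one_div_mul_eq_div]
  calc (q true y - q false y) ^ 2 / (q true y + q false y) / (2 * log 2)
      = (q true y - q false y) ^ 2 / (q true y + q false y) / 2 / log 2 := by ring
    _ ≤ _ := div_le_div_of_nonneg_right h hlog2.le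
    _ = _ := by rw [add_div, mul_div_assoc, mul_div_assoc]

lemma sub_sq_sum_div_le_sum_mul_sq {ι : Type*} (s : Finset ι) {w : ι → ℝ}
    (hw : ∀ i ∈ s, 0 ≤ w i) (x : ι → ℝ) (c : ℝ) :
    ∑ i ∈ s, w i * x i ^ 2 - (∑ i ∈ s, w i * x i) ^ 2 / ∑ i ∈ s, w i ≤
      ∑ i ∈ s, w i * (x i - c) ^ 2 := by
  have hexp : ∑ i ∈ s, w i * (x i - c) ^ 2 =
      ∑ i ∈ s, w i * x i ^ 2 - 2 * c * ∑ i ∈ s, w i * x i + c ^ 2 * ∑ i ∈ s, w i := by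
    simp only [mul_sum, ← sum_sub_distrib, ← sum_add_distrib]
    exact sum_congr rfl fun i _ => by ring
  rw [hexp]
  set A := ∑ i ∈ s, w i * x i
  set W := ∑ i ∈ s, w i
  have hW₀ : 0 ≤ W := sum_nonneg hw
  rcases hW₀.eq_or_lt with hW | hW
  · have hw0 : ∀ i ∈ s, w i = 0 := (sum_eq_zero_iff_of_nonneg hw).mp hW.symm
    have hA : A = 0 := sum_eq_zero fun i hi => by rw [hw0 i hi, zero_mul]
    simp [hA, ← hW]
  · have hsq : (A - c * W) ^ 2 / W = A ^ 2 / W - 2 * c * A + c ^ 2 * W := by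
      field_simp; ring
    have hnonneg : 0 ≤ (A - c * W) ^ 2 / W := by positivity
    linarith

lemma mul_div_sq_eq_sq_div {K : Type*} [Field K] (a b : K) : b * (a / b) ^ 2 = a ^ 2 / b := by
  rcases eq_or_ne b 0 with rfl | hb
  · simp
  · field_simp

lemma pm_sq (b : Bool) : pm b ^ 2 = 1 := by
  cases b <;> norm_num [pm]

lemma card_sub_sum_condMean_sq_le {ι 𝒴 : Type*} [Fintype ι] [DecidableEq ι] [Fintype 𝒴]
    (j : (ι → Bool) → 𝒴 → ℝ) (hj : ∀ z y, 0 ≤ j z y) (hsum : ∑ z, ∑ y, j z y = 1)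
    (g : 𝒴 → ι → ℝ) :
    (Fintype.card ι : ℝ) - ∑ i, ∑ y, (∑ z, j z y) * ((∑ z, pm (z i) * j z y) / ∑ z, j z y) ^ 2 ≤
      ∑ z, ∑ y, j z y * ∑ i, (pm (z i) - g y i) ^ 2 := by
  have hvar : ∀ i y, ∑ z, j z y - (∑ z, pm (z i) * j z y) ^ 2 / ∑ z, j z y ≤
      ∑ z, j z y * (pm (z i) - g y i) ^ 2 := fun i y => by
    simpa [pm_sq, mul_comm] using
      sub_sq_sum_div_le_sum_mul_sq univ (fun z _ => hj z y) (fun z => pm (z i)) (g y i)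
  calc (Fintype.card ι : ℝ) - ∑ i, ∑ y, (∑ z, j z y) * ((∑ z, pm (z i) * j z y) / ∑ z, j z y) ^ 2
      = ∑ i : ι, ∑ y, (∑ z, j z y - (∑ z, pm (z i) * j z y) ^ 2 / ∑ z, j z y) := by
        simp [sum_sub_distrib, mul_div_sq_eq_sq_div, sum_comm (γ := 𝒴), hsum]
    _ ≤ ∑ i, ∑ y, ∑ z, j z y * (pm (z i) - g y i) ^ 2 :=
        sum_le_sum fun i _ => sum_le_sum fun y _ => hvar i y
    _ = ∑ z, ∑ y, j z y * ∑ i, (pm (z i) - g y i) ^ 2 := by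
        simp only [mul_sum]
        exact (sum_congr rfl fun i _ => sum_comm).trans
          (sum_comm.trans (sum_congr rfl fun z _ => sum_comm))

section CoordJoint

variable {k : ℕ} {𝒴 : Type*} [Fintype 𝒴] (j : (Fin k → Bool) → 𝒴 → ℝ) (i : Fin k)

lemma coordJoint_nonneg (hj : ∀ z y, 0 ≤ j z y) (b : Bool) (y : 𝒴) : 0 ≤ coordJoint j i b y :=
  sum_nonneg fun z _ => by split_ifs <;> simp [hj z y]

lemma coordJoint_true_add_false (y : 𝒴) :
    coordJoint j i true y + coordJoint j i false y = ∑ z, j z y := by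
  rw [coordJoint, coordJoint, ← sum_add_distrib]
  exact sum_congr rfl fun z _ => by cases z i <;> simp

lemma coordJoint_true_sub_false (y : 𝒴) :
    coordJoint j i true y - coordJoint j i false y = ∑ z, pm (z i) * j z y := by
  rw [coordJoint, coordJoint, ← sum_sub_distrib]
  exact sum_congr rfl fun z _ => by cases z i <;> simp [pm]

lemma sum_coordJoint_of_uniform (hmarg : ∀ z, ∑ y, j z y = (1 / 2 : ℝ) ^ k) (b : Bool) :
    ∑ y, coordJoint j i b y = 1 / 2 := by
  classical
  have hcard : #{z : Fin k → Bool | z i = b} = 2 ^ (k - 1) := by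
    have := Fintype.card_filter_piFinset_const (univ : Finset Bool) i b
    rwa [Fintype.piFinset_univ, if_pos (mem_univ _), card_univ, Fintype.card_bool,
      Fintype.card_fin] at this
  obtain ⟨m, rfl⟩ : ∃ m, k = m + 1 := ⟨k - 1, by have := i.isLt; omega⟩
  simp only [coordJoint, ← sum_filter]
  rw [sum_comm, sum_congr rfl fun z _ => hmarg z, sum_const, hcard, nsmul_eq_mul]
  simp [pow_succ]

lemma sum_mul_condMean_sq_le_miBits_coordJoint (hj : ∀ z y, 0 ≤ j z y)
    (hmarg : ∀ z, ∑ y, j z y = (1 / 2 : ℝ) ^ k) :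
    1 / (2 * log 2) * ∑ y, (∑ z, j z y) * ((∑ z, pm (z i) * j z y) / ∑ z, j z y) ^ 2 ≤
      miBits (coordJoint j i) := by
  simpa only [coordJoint_true_add_false, coordJoint_true_sub_false, mul_div_sq_eq_sq_div] using
    sum_sq_sub_div_le_miBits (coordJoint j i) (coordJoint_nonneg j i hj)
      (sum_coordJoint_of_uniform j i hmarg)

end CoordJoint

/-- Information vs. mean squared loss: if `Z` is uniform on
`{−1,+1}^k` and `Y` is a finitely-valued observation (joint mass function `j`), then
`I(Z_i; Y) ≥ (1/(2 ln 2)) E[(E[Z_i|Y])²]` for each `i`, and on average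
`(1/k) Σᵢ I(Z_i; Y) ≥ (1/(2 ln 2)) (1 − mmse(Z|Y)/k)`, where the minimum mean squared
error is the infimum over estimators `g` of `E[‖Z − g(Y)‖₂²]`. Information is in bits. -/
theorem information_mse_loss
    (k : ℕ) (hk : 1 ≤ k) (𝒴 : Type) [Fintype 𝒴]
    (j : (Fin k → Bool) → 𝒴 → ℝ)
    (hj : ∀ z y, 0 ≤ j z y)
    (hmarg : ∀ z, ∑ y, j z y = (1 / 2 : ℝ) ^ k) :
    (∀ i : Fin k,
      (1 / (2 * Real.log 2)) *
        ∑ y, (∑ z, j z y) * ((∑ z, pm (z i) * j z y) / (∑ z, j z y)) ^ 2 ≤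
        miBits (coordJoint j i)) ∧
    (1 / (2 * Real.log 2)) *
        (1 - (⨅ g : 𝒴 → Fin k → ℝ,
          ∑ z, ∑ y, j z y * ∑ i : Fin k, (pm (z i) - g y i) ^ 2) / (k : ℝ)) ≤
      (1 / (k : ℝ)) * ∑ i : Fin k, miBits (coordJoint j i) := by
  have hinfo := fun i => sum_mul_condMean_sq_le_miBits_coordJoint j i hj hmarg
  refine ⟨hinfo, ?_⟩
  have hk₀ : (0 : ℝ) < k := by exact_mod_cast hk
  have hsum : ∑ z, ∑ y, j z y = 1 := by simp [hmarg]
  set S := ∑ i, ∑ y, (∑ z, j z y) * ((∑ z, pm (z i) * j z y) / ∑ z, j z y) ^ 2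
  have hmmse : k - S ≤ ⨅ g : 𝒴 → Fin k → ℝ, ∑ z, ∑ y, j z y * ∑ i, (pm (z i) - g y i) ^ 2 :=
    le_ciInf fun g => by simpa using card_sub_sum_condMean_sq_le j hj hsum g
  have hS : 1 / (2 * log 2) * S ≤ ∑ i, miBits (coordJoint j i) := by
    rw [mul_sum]
    exact sum_le_sum fun i _ => hinfo i
  calc 1 / (2 * log 2) * (1 - (⨅ g : 𝒴 → Fin k → ℝ,
        ∑ z, ∑ y, j z y * ∑ i, (pm (z i) - g y i) ^ 2) / k)
      ≤ 1 / (2 * log 2) * (S / k) := by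
        rw [one_sub_div hk₀.ne']
        gcongr
        linarith
    _ = 1 / k * (1 / (2 * log 2) * S) := by ring
    _ ≤ 1 / k * ∑ i, miBits (coordJoint j i) := by gcongr

end Paper
end
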